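/- arXiv:2404.17168 — 17 statements merged into one kernel-verified Lean document; each statement's English description precedes it below -/
import Mathlib

section
/- If A is invertible, S₁ = D + B A⁻¹ Bᵀ is invertible, and S₂ = E + C S₁⁻¹ Cᵀ is invertible, then K is invertible. -/
open Matrix

theorem stmt_1 (n m p : ℕ)
    (A : Matrix (Fin n) (Fin n) ℝ) (D : Matrix (Fin m) (Fin m) ℝ)
    (E : Matrix (Fin p) (Fin p) ℝ)
    (B : Matrix (Fin m) (Fin n) ℝ) (C : Matrix (Fin p) (Fin m) ℝ)
    (K : Matrix (Fin n ⊕ (Fin m ⊕ Fin p)) (Fin n ⊕ (Fin m ⊕ Fin p)) ℝ)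
    (hKdef : K = Matrix.fromBlocks A (Matrix.fromCols Bᵀ 0) (Matrix.fromRows B 0)
      (Matrix.fromBlocks (-D) Cᵀ C E))
    (hA : IsUnit A)
    (S₁ : Matrix (Fin m) (Fin m) ℝ) (hS₁def : S₁ = D + B * A⁻¹ * Bᵀ)
    (hS₁ : IsUnit S₁)
    (S₂ : Matrix (Fin p) (Fin p) ℝ) (hS₂def : S₂ = E + C * S₁⁻¹ * Cᵀ)
    (hS₂ : IsUnit S₂) :
    IsUnit K := by
  haveI iA := hA.invertible
  haveI iS₁ := hS₁.invertible
  haveI : Invertible (-S₁) := invertibleNeg S₁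
  rw [Matrix.isUnit_iff_isUnit_det, hKdef, Matrix.det_fromBlocks₁₁]
  have h1 : Matrix.fromRows B (0 : Matrix (Fin p) (Fin n) ℝ) * ⅟A *
        Matrix.fromCols Bᵀ (0 : Matrix (Fin n) (Fin p) ℝ)
      = Matrix.fromBlocks (B * ⅟A * Bᵀ) (0 : Matrix (Fin m) (Fin p) ℝ)
        (0 : Matrix (Fin p) (Fin m) ℝ) (0 : Matrix (Fin p) (Fin p) ℝ) := by
    rw [Matrix.fromRows_mul, Matrix.fromRows_mul_fromCols]
    simp
  have h2 : Matrix.fromBlocks (-D) Cᵀ C E - Matrix.fromBlocks (B * ⅟A * Bᵀ)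
        (0 : Matrix (Fin m) (Fin p) ℝ) (0 : Matrix (Fin p) (Fin m) ℝ) (0 : Matrix (Fin p) (Fin p) ℝ)
      = Matrix.fromBlocks (-S₁) Cᵀ C E := by
    rw [sub_eq_add_neg, Matrix.fromBlocks_neg, Matrix.fromBlocks_add]
    simp [hS₁def, Matrix.invOf_eq_nonsing_inv]
    abel
  rw [h1, h2, Matrix.det_fromBlocks₁₁]
  have h3 : E - C * ⅟(-S₁) * Cᵀ = S₂ := by
    rw [hS₂def, invOf_neg, Matrix.invOf_eq_nonsing_inv]
    simp [sub_eq_add_neg, Matrix.mul_neg, Matrix.neg_mul]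
  rw [h3]
  exact (hA.map detMonoidHom).mul (((isUnit_of_invertible (-S₁)).map detMonoidHom).mul
    (hS₂.map detMonoidHom))
end

section
/- Suppose A, D, E are symmetric positive semidefinite, ker(Bᵀ) ∩ ker(D) ∩ ker(C) = {0}, A is positive definite, and ker(Cᵀ) ∩ ker(E) = {0}. Then K is invertible. -/
open Matrix

theorem stmt_2 (n m p : ℕ)
    (A : Matrix (Fin n) (Fin n) ℝ) (D : Matrix (Fin m) (Fin m) ℝ)
    (E : Matrix (Fin p) (Fin p) ℝ)
    (B : Matrix (Fin m) (Fin n) ℝ) (C : Matrix (Fin p) (Fin m) ℝ)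
    (hA : A.PosSemidef) (hD : D.PosSemidef) (hE : E.PosSemidef)
    (hker : LinearMap.ker Bᵀ.mulVecLin ⊓ LinearMap.ker D.mulVecLin ⊓
      LinearMap.ker C.mulVecLin = ⊥)
    (hApd : A.PosDef)
    (hCE : LinearMap.ker Cᵀ.mulVecLin ⊓ LinearMap.ker E.mulVecLin = ⊥)
    (K : Matrix (Fin n ⊕ (Fin m ⊕ Fin p)) (Fin n ⊕ (Fin m ⊕ Fin p)) ℝ)
    (hKdef : K = Matrix.fromBlocks A (Matrix.fromCols Bᵀ 0) (Matrix.fromRows B 0)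
      (Matrix.fromBlocks (-D) Cᵀ C E)) :
    IsUnit K := by
  rw [Matrix.isUnit_iff_isUnit_det, isUnit_iff_ne_zero]
  intro hdet
  obtain ⟨v, hv, hKv⟩ := (Matrix.exists_mulVec_eq_zero_iff).mpr hdet
  set x : Fin n → ℝ := v ∘ Sum.inl with hx
  set y : Fin m → ℝ := v ∘ Sum.inr ∘ Sum.inl with hy
  set w : Fin p → ℝ := v ∘ Sum.inr ∘ Sum.inr with hw
  have hvelim : v = Sum.elim x (Sum.elim y w) := by
    funext i; rcases i with i | i | i <;> rfl
  rw [hKdef, hvelim, Matrix.fromBlocks_mulVec] at hKv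
  simp only [Sum.elim_comp_inl, Sum.elim_comp_inr, Matrix.fromCols_mulVec_sumElim,
    Matrix.fromRows_mulVec, Matrix.fromBlocks_mulVec, Matrix.zero_mulVec, add_zero,
    Matrix.neg_mulVec] at hKv
  have h1 : A *ᵥ x + Bᵀ *ᵥ y = 0 :=
    funext fun i => by
      have := congrFun hKv (Sum.inl i)
      simpa using this
  have h2 : B *ᵥ x + (-(D *ᵥ y) + Cᵀ *ᵥ w) = 0 :=
    funext fun i => by
      have := congrFun hKv (Sum.inr (Sum.inl i))
      simpa using this
  have h3 : C *ᵥ y + E *ᵥ w = 0 :=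
    funext fun i => by
      have := congrFun hKv (Sum.inr (Sum.inr i))
      simpa using this
  -- dot products
  have e1 : x ⬝ᵥ (A *ᵥ x) + x ⬝ᵥ (Bᵀ *ᵥ y) = 0 := by
    have := congrArg (fun u => x ⬝ᵥ u) h1
    simpa [dotProduct_add] using this
  have e2 : y ⬝ᵥ (B *ᵥ x) - y ⬝ᵥ (D *ᵥ y) + y ⬝ᵥ (Cᵀ *ᵥ w) = 0 := by
    have := congrArg (fun u => y ⬝ᵥ u) h2
    simpa [dotProduct_add, dotProduct_neg, sub_eq_add_neg, add_assoc] using this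
  have e3 : w ⬝ᵥ (C *ᵥ y) + w ⬝ᵥ (E *ᵥ w) = 0 := by
    have := congrArg (fun u => w ⬝ᵥ u) h3
    simpa [dotProduct_add] using this
  have sw1 : x ⬝ᵥ (Bᵀ *ᵥ y) = y ⬝ᵥ (B *ᵥ x) := by
    rw [Matrix.dotProduct_mulVec, Matrix.vecMul_transpose]
    exact dotProduct_comm _ _
  have sw2 : y ⬝ᵥ (Cᵀ *ᵥ w) = w ⬝ᵥ (C *ᵥ y) := by
    rw [Matrix.dotProduct_mulVec, Matrix.vecMul_transpose]
    exact dotProduct_comm _ _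
  have hsum : x ⬝ᵥ (A *ᵥ x) + y ⬝ᵥ (D *ᵥ y) + w ⬝ᵥ (E *ᵥ w) = 0 := by
    have := e1
    nlinarith [e1, e2, e3, sw1, sw2]
  have hxA : 0 ≤ x ⬝ᵥ (A *ᵥ x) := by simpa using hA.dotProduct_mulVec_nonneg x
  have hyD : 0 ≤ y ⬝ᵥ (D *ᵥ y) := by simpa using hD.dotProduct_mulVec_nonneg y
  have hwE : 0 ≤ w ⬝ᵥ (E *ᵥ w) := by simpa using hE.dotProduct_mulVec_nonneg w
  have hAx : x ⬝ᵥ (A *ᵥ x) = 0 := by linarith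
  have hDy0 : D *ᵥ y = 0 := by
    have : y ⬝ᵥ (D *ᵥ y) = 0 := by linarith
    have := (hD.dotProduct_mulVec_zero_iff y).mp (by simpa using this)
    exact this
  have hEw0 : E *ᵥ w = 0 := by
    have : w ⬝ᵥ (E *ᵥ w) = 0 := by linarith
    exact (hE.dotProduct_mulVec_zero_iff w).mp (by simpa using this)
  have hx0 : x = 0 := by
    by_contra hxne
    have := hApd.dotProduct_mulVec_pos hxne
    simp only [star_trivial] at this
    have : (0:ℝ) < x ⬝ᵥ (A *ᵥ x) := by simpa [dotProduct_comm] using this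
    linarith
  have hBty : Bᵀ *ᵥ y = 0 := by
    have := h1; rw [hx0, Matrix.mulVec_zero, zero_add] at this; exact this
  have hCy : C *ᵥ y = 0 := by
    have := h3; rw [hEw0, add_zero] at this; exact this
  have hy0 : y = 0 := by
    have hmem : y ∈ (LinearMap.ker Bᵀ.mulVecLin ⊓ LinearMap.ker D.mulVecLin ⊓
        LinearMap.ker C.mulVecLin) := by
      simp only [Submodule.mem_inf, LinearMap.mem_ker, Matrix.mulVecLin_apply]
      exact ⟨⟨hBty, hDy0⟩, hCy⟩
    rw [hker] at hmem
    simpa using hmem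
  have hCtw : Cᵀ *ᵥ w = 0 := by
    have := h2; rw [hx0, hy0] at this; simpa using this
  have hw0 : w = 0 := by
    have hmem : w ∈ (LinearMap.ker Cᵀ.mulVecLin ⊓ LinearMap.ker E.mulVecLin) := by
      simp only [Submodule.mem_inf, LinearMap.mem_ker, Matrix.mulVecLin_apply]
      exact ⟨hCtw, hEw0⟩
    rw [hCE] at hmem
    simpa using hmem
  apply hv
  rw [hvelim, hx0, hy0, hw0]
  simp [Sum.elim_zero_zero]
end

section
/- Suppose A, D, E are symmetric positive semidefinite, ker(Bᵀ) ∩ ker(D) ∩ ker(C) = {0}, E is positive definite, and ker(A) ∩ ker(B) = {0}. Then K is invertible. -/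
open Matrix

theorem stmt_3 (n m p : ℕ)
    (A : Matrix (Fin n) (Fin n) ℝ) (D : Matrix (Fin m) (Fin m) ℝ)
    (E : Matrix (Fin p) (Fin p) ℝ)
    (B : Matrix (Fin m) (Fin n) ℝ) (C : Matrix (Fin p) (Fin m) ℝ)
    (hA : A.PosSemidef) (hD : D.PosSemidef) (hE : E.PosSemidef)
    (hker : LinearMap.ker Bᵀ.mulVecLin ⊓ LinearMap.ker D.mulVecLin ⊓
      LinearMap.ker C.mulVecLin = ⊥)
    (hEpd : E.PosDef)
    (hAB : LinearMap.ker A.mulVecLin ⊓ LinearMap.ker B.mulVecLin = ⊥)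
    (K : Matrix (Fin n ⊕ (Fin m ⊕ Fin p)) (Fin n ⊕ (Fin m ⊕ Fin p)) ℝ)
    (hKdef : K = Matrix.fromBlocks A (Matrix.fromCols Bᵀ 0) (Matrix.fromRows B 0)
      (Matrix.fromBlocks (-D) Cᵀ C E)) :
    IsUnit K := by
  rw [Submodule.eq_bot_iff] at hker hAB
  suffices h : ∀ z, K *ᵥ z = 0 → z = 0 by
    rw [← Matrix.mulVec_injective_iff_isUnit]
    intro u v huv
    have := h (u - v) (by rw [Matrix.mulVec_sub, huv, sub_self])
    exact sub_eq_zero.mp this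
  intro z hz
  set x : Fin n → ℝ := fun i => z (Sum.inl i) with hx
  set y : Fin m → ℝ := fun j => z (Sum.inr (Sum.inl j)) with hy
  set w : Fin p → ℝ := fun k => z (Sum.inr (Sum.inr k)) with hw
  have hzeq : z = Sum.elim x (Sum.elim y w) := by
    ext (i | j | k) <;> rfl
  rw [hzeq, hKdef, Matrix.fromBlocks_mulVec] at hz
  have hztop := congrFun hz
  have e1 : A *ᵥ x + Bᵀ *ᵥ y = 0 := by
    ext i
    have := hztop (Sum.inl i)
    simpa [Matrix.fromCols_mulVec_sumElim] using this
  have e23 : (Matrix.fromRows B 0) *ᵥ x +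
      (Matrix.fromBlocks (-D) Cᵀ C E) *ᵥ Sum.elim y w = 0 := by
    ext jk
    have := hztop (Sum.inr jk)
    simpa using this
  rw [Matrix.fromBlocks_mulVec] at e23
  have e2 : B *ᵥ x + ((-D) *ᵥ y + Cᵀ *ᵥ w) = 0 := by
    ext j
    have := congrFun e23 (Sum.inl j)
    simpa [Matrix.fromRows_mulVec] using this
  have e3 : C *ᵥ y + E *ᵥ w = 0 := by
    ext k
    have := congrFun e23 (Sum.inr k)
    simpa [Matrix.fromRows_mulVec] using this
  -- dot products
  have h1 : x ⬝ᵥ (A *ᵥ x) + x ⬝ᵥ (Bᵀ *ᵥ y) = 0 := by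
    rw [← dotProduct_add, e1, dotProduct_zero]
  have h2 : y ⬝ᵥ (B *ᵥ x) + (y ⬝ᵥ ((-D) *ᵥ y) + y ⬝ᵥ (Cᵀ *ᵥ w)) = 0 := by
    rw [← dotProduct_add, ← dotProduct_add, e2, dotProduct_zero]
  have h3 : w ⬝ᵥ (C *ᵥ y) + w ⬝ᵥ (E *ᵥ w) = 0 := by
    rw [← dotProduct_add, e3, dotProduct_zero]
  have hBt : x ⬝ᵥ (Bᵀ *ᵥ y) = y ⬝ᵥ (B *ᵥ x) := by
    rw [Matrix.dotProduct_mulVec, Matrix.vecMul_transpose, dotProduct_comm]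
  have hCt : y ⬝ᵥ (Cᵀ *ᵥ w) = w ⬝ᵥ (C *ᵥ y) := by
    rw [Matrix.dotProduct_mulVec, Matrix.vecMul_transpose, dotProduct_comm]
  have hnegD : y ⬝ᵥ ((-D) *ᵥ y) = -(y ⬝ᵥ (D *ᵥ y)) := by
    rw [Matrix.neg_mulVec, dotProduct_neg]
  have hsum : x ⬝ᵥ (A *ᵥ x) + y ⬝ᵥ (D *ᵥ y) + w ⬝ᵥ (E *ᵥ w) = 0 := by
    rw [hBt] at h1; rw [hnegD, hCt] at h2
    linarith
  have hApos : 0 ≤ x ⬝ᵥ (A *ᵥ x) := by simpa using hA.dotProduct_mulVec_nonneg x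
  have hDpos : 0 ≤ y ⬝ᵥ (D *ᵥ y) := by simpa using hD.dotProduct_mulVec_nonneg y
  have hEpos : 0 ≤ w ⬝ᵥ (E *ᵥ w) := by simpa using hE.dotProduct_mulVec_nonneg w
  have hAz : x ⬝ᵥ (A *ᵥ x) = 0 := by linarith
  have hDz : y ⬝ᵥ (D *ᵥ y) = 0 := by linarith
  have hEz : w ⬝ᵥ (E *ᵥ w) = 0 := by linarith
  have hw0 : w = 0 := by
    by_contra hne
    have := hEpd.dotProduct_mulVec_pos hne
    simp only [star_trivial] at this
    linarith
  have hAx : A *ᵥ x = 0 := by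
    have := (hA.dotProduct_mulVec_zero_iff x).mp (by simpa using hAz)
    simpa using this
  have hDy : D *ᵥ y = 0 := by
    have := (hD.dotProduct_mulVec_zero_iff y).mp (by simpa using hDz)
    simpa using this
  have hBty : Bᵀ *ᵥ y = 0 := by
    rw [hAx, zero_add] at e1; exact e1
  have hCy : C *ᵥ y = 0 := by
    rw [hw0, Matrix.mulVec_zero, add_zero] at e3; exact e3
  have hBx : B *ᵥ x = 0 := by
    rw [hw0, Matrix.mulVec_zero, add_zero, Matrix.neg_mulVec, hDy, neg_zero,
      add_zero] at e2
    exact e2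
  have hy0 : y = 0 := by
    apply hker y
    refine ⟨⟨?_, ?_⟩, ?_⟩ <;>
      simp [LinearMap.mem_ker, Matrix.mulVecLin_apply, ← Matrix.mulVec_transpose,
        hBty, hDy, hCy]
  have hx0 : x = 0 := by
    apply hAB x
    exact ⟨by simp [LinearMap.mem_ker, Matrix.mulVecLin_apply, hAx],
      by simp [LinearMap.mem_ker, Matrix.mulVecLin_apply, hBx]⟩
  rw [hzeq, hx0, hy0, hw0]
  ext (i | j | k) <;> rfl
end

section
/- Suppose A, D, E are symmetric positive semidefinite, ker(Bᵀ) ∩ ker(D) ∩ ker(C) = {0}, ran(B) ∩ ran(Cᵀ) = {0}, ker(Cᵀ) ∩ ker(E) = {0}, and ker(A) ∩ ker(B) = {0}. Then K is invertible. -/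
open Matrix

theorem stmt_4 (n m p : ℕ)
    (A : Matrix (Fin n) (Fin n) ℝ) (D : Matrix (Fin m) (Fin m) ℝ)
    (E : Matrix (Fin p) (Fin p) ℝ)
    (B : Matrix (Fin m) (Fin n) ℝ) (C : Matrix (Fin p) (Fin m) ℝ)
    (hA : A.PosSemidef) (hD : D.PosSemidef) (hE : E.PosSemidef)
    (hker : LinearMap.ker Bᵀ.mulVecLin ⊓ LinearMap.ker D.mulVecLin ⊓
      LinearMap.ker C.mulVecLin = ⊥)
    (hran : LinearMap.range B.mulVecLin ⊓ LinearMap.range Cᵀ.mulVecLin = ⊥)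
    (hCE : LinearMap.ker Cᵀ.mulVecLin ⊓ LinearMap.ker E.mulVecLin = ⊥)
    (hAB : LinearMap.ker A.mulVecLin ⊓ LinearMap.ker B.mulVecLin = ⊥)
    (K : Matrix (Fin n ⊕ (Fin m ⊕ Fin p)) (Fin n ⊕ (Fin m ⊕ Fin p)) ℝ)
    (hKdef : K = Matrix.fromBlocks A (Matrix.fromCols Bᵀ 0) (Matrix.fromRows B 0)
      (Matrix.fromBlocks (-D) Cᵀ C E)) :
    IsUnit K := by
  subst hKdef
  rw [← Matrix.mulVec_injective_iff_isUnit, ← Matrix.coe_mulVecLin]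
  rw [show ⇑(Matrix.mulVecLin _) = (Matrix.mulVecLin _ : _ →ₗ[ℝ] _) from rfl,
    ← LinearMap.ker_eq_bot, LinearMap.ker_eq_bot']
  intro v hv
  simp only [mulVecLin_apply] at hv
  set x : Fin n → ℝ := v ∘ Sum.inl with hx
  set y : Fin m → ℝ := v ∘ Sum.inr ∘ Sum.inl with hy
  set z : Fin p → ℝ := v ∘ Sum.inr ∘ Sum.inr with hz
  have hvdef : v = Sum.elim x (Sum.elim y z) := by
    funext i; rcases i with i | (i | i) <;> rfl
  rw [hvdef, Matrix.fromBlocks_mulVec] at hv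
  simp only [Sum.elim_comp_inl, Sum.elim_comp_inr] at hv
  rw [Matrix.fromCols_mulVec_sumElim, Matrix.fromRows_mulVec,
    Matrix.fromBlocks_mulVec] at hv
  simp only [Sum.elim_comp_inl, Sum.elim_comp_inr, Matrix.zero_mulVec, add_zero,
    Matrix.neg_mulVec] at hv
  have eq1 : A *ᵥ x + Bᵀ *ᵥ y = 0 := by
    funext i; simpa using congrFun hv (Sum.inl i)
  have eq2 : B *ᵥ x + (-(D *ᵥ y) + Cᵀ *ᵥ z) = 0 := by
    funext i; simpa using congrFun hv (Sum.inr (Sum.inl i))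
  have eq3 : C *ᵥ y + E *ᵥ z = 0 := by
    funext i; simpa using congrFun hv (Sum.inr (Sum.inr i))
  -- scalar equations
  have d1 : x ⬝ᵥ (A *ᵥ x) + y ⬝ᵥ (B *ᵥ x) = 0 := by
    have := congrArg (fun w => x ⬝ᵥ w) eq1
    simpa [dotProduct_add, dotProduct_mulVec, vecMul_transpose, dotProduct_comm y] using this
  have d2 : y ⬝ᵥ (B *ᵥ x) - y ⬝ᵥ (D *ᵥ y) + z ⬝ᵥ (C *ᵥ y) = 0 := by
    have := congrArg (fun w => y ⬝ᵥ w) eq2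
    simpa [dotProduct_add, dotProduct_mulVec, vecMul_transpose, dotProduct_comm z,
      sub_eq_add_neg, add_assoc] using this
  have d3 : z ⬝ᵥ (C *ᵥ y) + z ⬝ᵥ (E *ᵥ z) = 0 := by
    have := congrArg (fun w => z ⬝ᵥ w) eq3
    simpa [dotProduct_add] using this
  have hsum : x ⬝ᵥ (A *ᵥ x) + y ⬝ᵥ (D *ᵥ y) + z ⬝ᵥ (E *ᵥ z) = 0 := by
    linarith
  have hAx0 : x ⬝ᵥ (A *ᵥ x) ≥ 0 := by simpa using hA.dotProduct_mulVec_nonneg x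
  have hDy0 : y ⬝ᵥ (D *ᵥ y) ≥ 0 := by simpa using hD.dotProduct_mulVec_nonneg y
  have hEz0 : z ⬝ᵥ (E *ᵥ z) ≥ 0 := by simpa using hE.dotProduct_mulVec_nonneg z
  have hAx : A *ᵥ x = 0 := by
    have : x ⬝ᵥ (A *ᵥ x) = 0 := by linarith
    simpa using (hA.dotProduct_mulVec_zero_iff x).mp (by simpa using this)
  have hDy : D *ᵥ y = 0 := by
    have : y ⬝ᵥ (D *ᵥ y) = 0 := by linarith
    simpa using (hD.dotProduct_mulVec_zero_iff y).mp (by simpa using this)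
  have hEz : E *ᵥ z = 0 := by
    have : z ⬝ᵥ (E *ᵥ z) = 0 := by linarith
    simpa using (hE.dotProduct_mulVec_zero_iff z).mp (by simpa using this)
  have hBty : Bᵀ *ᵥ y = 0 := by
    have := eq1; rw [hAx, zero_add] at this; exact this
  have hCy : C *ᵥ y = 0 := by
    have := eq3; rw [hEz, add_zero] at this; exact this
  have hBxCz : B *ᵥ x = Cᵀ *ᵥ (-z) := by
    have := eq2
    rw [hDy, neg_zero, zero_add] at this
    rw [Matrix.mulVec_neg]
    linear_combination (norm := module) this
  have hBx : B *ᵥ x = 0 := by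
    have hmem : B *ᵥ x ∈ (LinearMap.range B.mulVecLin ⊓ LinearMap.range Cᵀ.mulVecLin) :=
      Submodule.mem_inf.mpr ⟨⟨x, rfl⟩, ⟨-z, hBxCz.symm⟩⟩
    rw [hran] at hmem
    simpa using hmem
  have hCz : Cᵀ *ᵥ z = 0 := by
    have : Cᵀ *ᵥ (-z) = 0 := hBxCz ▸ hBx
    rw [Matrix.mulVec_neg, neg_eq_zero] at this
    exact this
  have hy0 : y = 0 := by
    have hmem : y ∈ (LinearMap.ker Bᵀ.mulVecLin ⊓ LinearMap.ker D.mulVecLin ⊓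
        LinearMap.ker C.mulVecLin) :=
      Submodule.mem_inf.mpr ⟨Submodule.mem_inf.mpr ⟨hBty, hDy⟩, hCy⟩
    rw [hker] at hmem
    simpa using hmem
  have hz0 : z = 0 := by
    have hmem : z ∈ (LinearMap.ker Cᵀ.mulVecLin ⊓ LinearMap.ker E.mulVecLin) :=
      Submodule.mem_inf.mpr ⟨hCz, hEz⟩
    rw [hCE] at hmem
    simpa using hmem
  have hx0 : x = 0 := by
    have hmem : x ∈ (LinearMap.ker A.mulVecLin ⊓ LinearMap.ker B.mulVecLin) :=
      Submodule.mem_inf.mpr ⟨hAx, hBx⟩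
    rw [hAB] at hmem
    simpa using hmem
  rw [hvdef, hx0, hy0, hz0]
  funext i; rcases i with i | (i | i) <;> rfl
end

section
/- Suppose D and E are symmetric positive definite, A = 0, and m ≥ n. Then K is invertible if and only if rank(B) = n. -/
open Matrix

lemma aux_inj {m n : ℕ} (A : Matrix (Fin m) (Fin n) ℝ) (h : A.rank = n) :
    Function.Injective A.mulVecLin := by
  rw [← LinearMap.ker_eq_bot]
  rw [← Submodule.finrank_eq_zero (R := ℝ)]
  have h2 := LinearMap.finrank_range_add_finrank_ker A.mulVecLin
  rw [Module.finrank_pi] at h2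
  have h3 : A.rank = Module.finrank ℝ (LinearMap.range A.mulVecLin) := rfl
  simp [Fintype.card_fin] at h2
  omega

lemma aux_key {m n : ℕ} (B : Matrix (Fin m) (Fin n) ℝ) (P : Matrix (Fin m) (Fin m) ℝ)
    (hP : P.PosDef) : IsUnit (Bᵀ * P * B) ↔ B.rank = n := by
  constructor
  · intro h
    have h1 := B.rank_le_width
    have h2 : (Bᵀ * P * B).rank = n := by
      rw [Matrix.rank_of_isUnit _ h, Fintype.card_fin]
    have h3 := Matrix.rank_mul_le_right (Bᵀ * P) B
    omega
  · intro h
    refine Matrix.PosDef.isUnit ?_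
    rw [posDef_iff_dotProduct_mulVec]
    constructor
    · have := hP.posSemidef.conjTranspose_mul_mul_same B
      rw [conjTranspose_eq_transpose_of_trivial] at this
      exact this.1
    · intro x hx
      have hBx : B *ᵥ x ≠ 0 := by
        intro hc
        apply hx
        have := aux_inj B h
        have := this (a₁ := x) (a₂ := 0) (by simpa using hc)
        simpa using this
      have := hP.dotProduct_mulVec_pos hBx
      simpa [star_trivial, ← mulVec_mulVec, dotProduct_mulVec, vecMul_transpose] using this

theorem stmt_6 (n m p : ℕ) (hmn : m ≥ n)
    (D : Matrix (Fin m) (Fin m) ℝ) (E : Matrix (Fin p) (Fin p) ℝ)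
    (B : Matrix (Fin m) (Fin n) ℝ) (C : Matrix (Fin p) (Fin m) ℝ)
    (hD : D.PosDef) (hE : E.PosDef)
    (K : Matrix (Fin n ⊕ (Fin m ⊕ Fin p)) (Fin n ⊕ (Fin m ⊕ Fin p)) ℝ)
    (hKdef : K = Matrix.fromBlocks 0 (Matrix.fromCols Bᵀ 0) (Matrix.fromRows B 0)
      (Matrix.fromBlocks (-D) Cᵀ C E)) :
    IsUnit K ↔ B.rank = n := by
  subst hKdef
  haveI : Invertible E := hE.isUnit.invertible
  have hP : (D + Cᵀ * E⁻¹ * C).PosDef := by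
    apply hD.add_posSemidef
    have := hE.inv.posSemidef.conjTranspose_mul_mul_same C
    rwa [conjTranspose_eq_transpose_of_trivial] at this
  haveI : Invertible (D + Cᵀ * E⁻¹ * C) := hP.isUnit.invertible
  have hSeq : -D - Cᵀ * ⅟E * C = -(D + Cᵀ * E⁻¹ * C) := by
    rw [invOf_eq_nonsing_inv]; abel
  haveI : Invertible (-D - Cᵀ * ⅟E * C) := by
    rw [hSeq]; exact hP.isUnit.neg.invertible
  haveI : Invertible (fromBlocks (-D) Cᵀ C E) := fromBlocks₂₂Invertible _ _ _ _
  rw [isUnit_fromBlocks_iff_of_invertible₂₂, invOf_fromBlocks₂₂_eq,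
    fromCols_mul_fromBlocks, fromCols_mul_fromRows]
  have hI : ⅟(-D - Cᵀ * ⅟E * C) = -(⅟(D + Cᵀ * E⁻¹ * C)) := by
    apply invOf_eq_right_inv
    rw [hSeq, neg_mul_neg, mul_invOf_self]
  rw [hI]
  simp only [Matrix.zero_mul, Matrix.mul_zero, add_zero, zero_add, Matrix.mul_neg,
    Matrix.neg_mul, neg_neg, zero_sub, sub_neg_eq_add]
  rw [invOf_eq_nonsing_inv]
  exact aux_key B _ hP.inv
end

section
/- Suppose A and D are symmetric positive definite, E = 0, and m ≥ p. Then K is invertible if and only if rank(C) = p. -/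
open Matrix

lemma rank_eq_iff_inj {a b : ℕ} (M : Matrix (Fin a) (Fin b) ℝ) :
    M.rank = b ↔ ∀ v, M *ᵥ v = 0 → v = 0 := by
  have h := LinearMap.finrank_range_add_finrank_ker M.mulVecLin
  have hb : Module.finrank ℝ (Fin b → ℝ) = b := by simp
  rw [hb] at h
  rw [← Matrix.ker_mulVecLin_eq_bot_iff, ← Submodule.finrank_eq_zero]
  unfold Matrix.rank
  omega

theorem stmt_7 (n m p : ℕ) (hmp : m ≥ p)
    (A : Matrix (Fin n) (Fin n) ℝ) (D : Matrix (Fin m) (Fin m) ℝ)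
    (B : Matrix (Fin m) (Fin n) ℝ) (C : Matrix (Fin p) (Fin m) ℝ)
    (hA : A.PosDef) (hD : D.PosDef)
    (K : Matrix (Fin n ⊕ (Fin m ⊕ Fin p)) (Fin n ⊕ (Fin m ⊕ Fin p)) ℝ)
    (hKdef : K = Matrix.fromBlocks A (Matrix.fromCols Bᵀ 0) (Matrix.fromRows B 0)
      (Matrix.fromBlocks (-D) Cᵀ C 0)) :
    IsUnit K ↔ C.rank = p := by
  have hCt : Cᵀ.rank = C.rank := Matrix.rank_transpose C
  rw [← Matrix.mulVec_injective_iff_isUnit, ← hCt, rank_eq_iff_inj]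
  constructor
  · -- injective K → Cᵀ injective kernel
    intro hK z hz
    have h0 : K *ᵥ (Sum.elim 0 (Sum.elim 0 z)) = 0 := by
      subst hKdef
      funext i
      cases i with
      | inl i => simp [Matrix.fromBlocks_mulVec, Matrix.fromCols_mulVec_sumElim]
      | inr i =>
        cases i with
        | inl i =>
          simp [Matrix.fromBlocks_mulVec, Matrix.fromRows_mulVec,
            Matrix.fromCols_mulVec_sumElim, hz]
        | inr i =>
          simp [Matrix.fromBlocks_mulVec, Matrix.fromRows_mulVec,
            Matrix.fromCols_mulVec_sumElim]
    have : (Sum.elim 0 (Sum.elim 0 z) : Fin n ⊕ (Fin m ⊕ Fin p) → ℝ) = 0 := by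
      apply hK
      rw [h0, Matrix.mulVec_zero]
    funext i
    have := congrFun this (Sum.inr (Sum.inr i))
    simpa using this
  · -- Cᵀ trivial kernel → K injective
    intro hC
    have hker : ∀ w, K *ᵥ w = 0 → w = 0 := by
      intro w hw
      obtain ⟨x, yz, rfl⟩ : ∃ x yz, w = Sum.elim x yz :=
        ⟨w ∘ Sum.inl, w ∘ Sum.inr, by funext i; cases i <;> rfl⟩
      obtain ⟨y, z, rfl⟩ : ∃ y z, yz = Sum.elim y z :=
        ⟨yz ∘ Sum.inl, yz ∘ Sum.inr, by funext i; cases i <;> rfl⟩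
      subst hKdef
      rw [Matrix.fromBlocks_mulVec] at hw
      have e1 : A *ᵥ x + (Matrix.fromCols Bᵀ 0) *ᵥ (Sum.elim y z) = 0 := by
        funext i; exact congrFun hw (Sum.inl i)
      have e23 : (Matrix.fromRows B 0) *ᵥ x
          + (Matrix.fromBlocks (-D) Cᵀ C 0) *ᵥ (Sum.elim y z) = 0 := by
        funext i; exact congrFun hw (Sum.inr i)
      rw [Matrix.fromCols_mulVec_sumElim] at e1
      rw [Matrix.fromRows_mulVec, Matrix.fromBlocks_mulVec] at e23
      have e2 : B *ᵥ x + ((-D) *ᵥ y + Cᵀ *ᵥ z) = 0 := by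
        funext i; exact congrFun e23 (Sum.inl i)
      have e3 : C *ᵥ y = 0 := by
        funext i
        have := congrFun e23 (Sum.inr i)
        simpa using this
      have e1' : A *ᵥ x + Bᵀ *ᵥ y = 0 := by simpa using e1
      -- scalar computation
      have key : x ⬝ᵥ (A *ᵥ x) + y ⬝ᵥ (D *ᵥ y) = 0 := by
        have h1 : x ⬝ᵥ (A *ᵥ x) + x ⬝ᵥ (Bᵀ *ᵥ y) = 0 := by
          rw [← dotProduct_add, e1', dotProduct_zero]
        have h2 : y ⬝ᵥ (B *ᵥ x) + (y ⬝ᵥ ((-D) *ᵥ y) + y ⬝ᵥ (Cᵀ *ᵥ z)) = 0 := by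
          rw [← dotProduct_add, ← dotProduct_add, e2, dotProduct_zero]
        have hBt : x ⬝ᵥ (Bᵀ *ᵥ y) = y ⬝ᵥ (B *ᵥ x) := by
          rw [Matrix.dotProduct_mulVec, Matrix.vecMul_transpose, dotProduct_comm]
        have hCz : y ⬝ᵥ (Cᵀ *ᵥ z) = 0 := by
          rw [Matrix.dotProduct_mulVec, Matrix.vecMul_transpose, e3, zero_dotProduct]
        have hDneg : y ⬝ᵥ ((-D) *ᵥ y) = -(y ⬝ᵥ (D *ᵥ y)) := by
          rw [Matrix.neg_mulVec, dotProduct_neg]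
        rw [hBt] at h1
        rw [hCz, hDneg] at h2
        linarith
      have hAx : 0 ≤ x ⬝ᵥ (A *ᵥ x) := by
        rcases eq_or_ne x 0 with h | h
        · simp [h]
        · exact le_of_lt (by simpa using hA.dotProduct_mulVec_pos h)
      have hDy : 0 ≤ y ⬝ᵥ (D *ᵥ y) := by
        rcases eq_or_ne y 0 with h | h
        · simp [h]
        · exact le_of_lt (by simpa using hD.dotProduct_mulVec_pos h)
      have hx0 : x = 0 := by
        by_contra h
        have := hA.dotProduct_mulVec_pos h
        simp only [RCLike.star_def, star_trivial] at this
        have : 0 < x ⬝ᵥ (A *ᵥ x) := by simpa using hA.dotProduct_mulVec_pos h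
        linarith
      have hy0 : y = 0 := by
        by_contra h
        have : 0 < y ⬝ᵥ (D *ᵥ y) := by simpa using hD.dotProduct_mulVec_pos h
        linarith
      have hz0 : z = 0 := by
        apply hC
        have := e2
        rw [hx0, hy0] at this
        simpa using this
      rw [hx0, hy0, hz0]
      funext i; cases i with
      | inl i => rfl
      | inr i => cases i <;> rfl
    intro u v huv
    have : K *ᵥ (u - v) = 0 := by
      rw [Matrix.mulVec_sub, huv, sub_self]
    have := hker _ this
    exact sub_eq_zero.mp this
end

section
/- Suppose A and E are symmetric positive definite and D = 0. Then K is invertible if and only if ker(Bᵀ) ∩ ker(C) = {0}. -/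
open Matrix

lemma posdef_dot_zero {k : ℕ} {M : Matrix (Fin k) (Fin k) ℝ} (hM : M.PosDef)
    {x : Fin k → ℝ} (h : x ⬝ᵥ (M *ᵥ x) = 0) : x = 0 := by
  by_contra hx
  have := hM.dotProduct_mulVec_pos hx
  rw [star_trivial, h] at this
  exact lt_irrefl 0 this

theorem stmt_8 (n m p : ℕ)
    (A : Matrix (Fin n) (Fin n) ℝ) (E : Matrix (Fin p) (Fin p) ℝ)
    (B : Matrix (Fin m) (Fin n) ℝ) (C : Matrix (Fin p) (Fin m) ℝ)
    (hA : A.PosDef) (hE : E.PosDef)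
    (K : Matrix (Fin n ⊕ (Fin m ⊕ Fin p)) (Fin n ⊕ (Fin m ⊕ Fin p)) ℝ)
    (hKdef : K = Matrix.fromBlocks A (Matrix.fromCols Bᵀ 0) (Matrix.fromRows B 0)
      (Matrix.fromBlocks 0 Cᵀ C E)) :
    IsUnit K ↔ LinearMap.ker Bᵀ.mulVecLin ⊓ LinearMap.ker C.mulVecLin = ⊥ := by
  rw [← Matrix.mulVec_injective_iff_isUnit]
  constructor
  · intro hK
    rw [Submodule.eq_bot_iff]
    rintro y ⟨hy1, hy2⟩
    have hy1' : Bᵀ *ᵥ y = 0 := hy1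
    have hy2' : C *ᵥ y = 0 := hy2
    have h0 : K *ᵥ (Sum.elim (0 : Fin n → ℝ) (Sum.elim y (0 : Fin p → ℝ))) = 0 := by
      subst hKdef
      rw [fromBlocks_mulVec]
      simp only [Sum.elim_comp_inl, Sum.elim_comp_inr]
      rw [fromCols_mulVec_sumElim, fromRows_mulVec, fromBlocks_mulVec]
      simp [hy1', hy2']
    have := hK (a₁ := Sum.elim 0 (Sum.elim y 0)) (a₂ := 0) (by simpa using h0)
    funext i
    have := congrFun this (Sum.inr (Sum.inl i))
    simpa using this
  · intro hker
    rw [Function.Injective]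
    -- suffices: kernel trivial
    suffices h : ∀ v, K *ᵥ v = 0 → v = 0 by
      intro a b hab
      have : K *ᵥ (a - b) = 0 := by
        rw [mulVec_sub, hab, sub_self]
      have := h _ this
      exact sub_eq_zero.mp this
    intro v hv
    set x := v ∘ Sum.inl with hx
    set y := v ∘ Sum.inr ∘ Sum.inl with hy
    set z := v ∘ Sum.inr ∘ Sum.inr with hz
    have hv' : v = Sum.elim x (Sum.elim y z) := by
      funext i; rcases i with i | i | i <;> rfl
    rw [hv', hKdef] at hv
    rw [fromBlocks_mulVec] at hv
    simp only [Sum.elim_comp_inl, Sum.elim_comp_inr] at hv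
    rw [fromCols_mulVec_sumElim, fromRows_mulVec, fromBlocks_mulVec] at hv
    have e1 : A *ᵥ x + Bᵀ *ᵥ y = 0 := by
      funext i; have := congrFun hv (Sum.inl i); simpa using this
    have e2 : B *ᵥ x + Cᵀ *ᵥ z = 0 := by
      funext i; have := congrFun hv (Sum.inr (Sum.inl i)); simpa using this
    have e3 : C *ᵥ y + E *ᵥ z = 0 := by
      funext i; have := congrFun hv (Sum.inr (Sum.inr i)); simpa using this
    -- quadratic form computation
    have q1 : x ⬝ᵥ (A *ᵥ x) + x ⬝ᵥ (Bᵀ *ᵥ y) = 0 := by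
      rw [← dotProduct_add, e1, dotProduct_zero]
    have q2 : y ⬝ᵥ (B *ᵥ x) + y ⬝ᵥ (Cᵀ *ᵥ z) = 0 := by
      rw [← dotProduct_add, e2, dotProduct_zero]
    have q3 : z ⬝ᵥ (C *ᵥ y) + z ⬝ᵥ (E *ᵥ z) = 0 := by
      rw [← dotProduct_add, e3, dotProduct_zero]
    have s1 : x ⬝ᵥ (Bᵀ *ᵥ y) = y ⬝ᵥ (B *ᵥ x) := by
      rw [dotProduct_mulVec, vecMul_transpose, dotProduct_comm]
    have s2 : y ⬝ᵥ (Cᵀ *ᵥ z) = z ⬝ᵥ (C *ᵥ y) := by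
      rw [dotProduct_mulVec, vecMul_transpose, dotProduct_comm]
    have key : x ⬝ᵥ (A *ᵥ x) + z ⬝ᵥ (E *ᵥ z) = 0 := by
      have := q1; have := q2; have := q3
      linarith [q1, q2, q3, s1, s2]
    have hAx : (0:ℝ) ≤ x ⬝ᵥ (A *ᵥ x) := by
      have := hA.posSemidef.dotProduct_mulVec_nonneg x; simpa using this
    have hEz : (0:ℝ) ≤ z ⬝ᵥ (E *ᵥ z) := by
      have := hE.posSemidef.dotProduct_mulVec_nonneg z; simpa using this
    have hx0 : x = 0 := posdef_dot_zero hA (by linarith)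
    have hz0 : z = 0 := posdef_dot_zero hE (by linarith)
    have hBy : Bᵀ *ᵥ y = 0 := by
      rw [hx0, mulVec_zero, zero_add] at e1; exact e1
    have hCy : C *ᵥ y = 0 := by
      rw [hz0, mulVec_zero, add_zero] at e3; exact e3
    have : y = 0 := by
      have hmem : y ∈ LinearMap.ker Bᵀ.mulVecLin ⊓ LinearMap.ker C.mulVecLin :=
        ⟨by simpa [← vecMul_transpose] using hBy, by simpa using hCy⟩
      rw [hker] at hmem
      exact hmem
    rw [hv', hx0, this, hz0]
    funext i; rcases i with i | i | i <;> rfl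
end

section
/- Suppose A, D, E are symmetric positive semidefinite with ker(A) ∩ ker(B) = {0}, ker(Cᵀ) ∩ ker(E) = {0}, ker(Bᵀ) ∩ ker(D) ∩ ker(C) = {0}, and additionally ker(A) ⊕ ker(B) = ℝⁿ and ker(E) ⊕ ker(Cᵀ) = ℝᵖ. If K is invertible, then ran(B) ∩ ran(Cᵀ) = {0}. -/
open Matrix

theorem stmt_9 (n m p : ℕ)
    (A : Matrix (Fin n) (Fin n) ℝ) (D : Matrix (Fin m) (Fin m) ℝ)
    (E : Matrix (Fin p) (Fin p) ℝ)
    (B : Matrix (Fin m) (Fin n) ℝ) (C : Matrix (Fin p) (Fin m) ℝ)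
    (hA : A.PosSemidef) (hD : D.PosSemidef) (hE : E.PosSemidef)
    (hAB : LinearMap.ker A.mulVecLin ⊓ LinearMap.ker B.mulVecLin = ⊥)
    (hCE : LinearMap.ker Cᵀ.mulVecLin ⊓ LinearMap.ker E.mulVecLin = ⊥)
    (hker : LinearMap.ker Bᵀ.mulVecLin ⊓ LinearMap.ker D.mulVecLin ⊓
      LinearMap.ker C.mulVecLin = ⊥)
    (hABsum : LinearMap.ker A.mulVecLin ⊔ LinearMap.ker B.mulVecLin = ⊤)
    (hECsum : LinearMap.ker E.mulVecLin ⊔ LinearMap.ker Cᵀ.mulVecLin = ⊤)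
    (K : Matrix (Fin n ⊕ (Fin m ⊕ Fin p)) (Fin n ⊕ (Fin m ⊕ Fin p)) ℝ)
    (hKdef : K = Matrix.fromBlocks A (Matrix.fromCols Bᵀ 0) (Matrix.fromRows B 0)
      (Matrix.fromBlocks (-D) Cᵀ C E))
    (hK : IsUnit K) :
    LinearMap.range B.mulVecLin ⊓ LinearMap.range Cᵀ.mulVecLin = ⊥ := by
  rw [eq_bot_iff]
  intro y hy
  obtain ⟨hy1, hy2⟩ := Submodule.mem_inf.mp hy
  obtain ⟨x, hx⟩ := hy1
  obtain ⟨z, hz⟩ := hy2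
  have hx' : x ∈ LinearMap.ker A.mulVecLin ⊔ LinearMap.ker B.mulVecLin :=
    hABsum ▸ Submodule.mem_top
  obtain ⟨xA, hxA, xB, hxB, hxsum⟩ := Submodule.mem_sup.mp hx'
  have hz' : z ∈ LinearMap.ker E.mulVecLin ⊔ LinearMap.ker Cᵀ.mulVecLin :=
    hECsum ▸ Submodule.mem_top
  obtain ⟨zE, hzE, zC, hzC, hzsum⟩ := Submodule.mem_sup.mp hz'
  rw [LinearMap.mem_ker, Matrix.mulVecLin_apply] at hxA hxB hzE hzC
  rw [Matrix.mulVecLin_apply] at hx hz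
  have hBxA : B *ᵥ xA = y := by
    have : B *ᵥ (xA + xB) = y := by rw [hxsum]; exact hx
    rwa [Matrix.mulVec_add, hxB, add_zero] at this
  have hCzE : Cᵀ *ᵥ zE = y := by
    have : Cᵀ *ᵥ (zE + zC) = y := by rw [hzsum]; exact hz
    rwa [Matrix.mulVec_add, hzC, add_zero] at this
  set v : Fin n ⊕ (Fin m ⊕ Fin p) → ℝ := Sum.elim xA (Sum.elim 0 (-zE)) with hv
  have hKv : K *ᵥ v = 0 := by
    rw [hKdef, hv, Matrix.fromBlocks_mulVec]
    simp only [Sum.elim_comp_inl, Sum.elim_comp_inr, Matrix.fromCols_mulVec_sumElim,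
      Matrix.fromRows_mulVec, Matrix.fromBlocks_mulVec]
    simp [hxA, hBxA, hCzE, hzE, Matrix.mulVec_neg]
    ext (i | (j | k)) <;> simp
  have hinj : Function.Injective (K.mulVec) := Matrix.mulVec_injective_iff_isUnit.mpr hK
  have hv0 : v = 0 := by
    apply hinj
    rw [hKv, Matrix.mulVec_zero]
  have hxA0 : xA = 0 := by
    have := congrArg (fun f => f ∘ Sum.inl) hv0
    simpa [hv] using this
  show y ∈ (⊥ : Submodule ℝ (Fin m → ℝ))
  simp [← hBxA, hxA0]
end

section
/- Suppose ker(Cᵀ) ∩ ker(E) = {0}, n ≥ m, rank(B) = m, ker(A) ⊕ ker(B) = ℝⁿ, A is symmetric positive semidefinite, and ran(B) ∩ ran(Cᵀ) = {0}. Then K is invertible (with D, E arbitrary symmetric matrices). -/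
open Matrix

theorem stmt_10 (n m p : ℕ) (hnm : n ≥ m)
    (A : Matrix (Fin n) (Fin n) ℝ) (D : Matrix (Fin m) (Fin m) ℝ)
    (E : Matrix (Fin p) (Fin p) ℝ)
    (B : Matrix (Fin m) (Fin n) ℝ) (C : Matrix (Fin p) (Fin m) ℝ)
    (hA : A.PosSemidef) (hD : D.IsSymm) (hE : E.IsSymm)
    (hCE : LinearMap.ker Cᵀ.mulVecLin ⊓ LinearMap.ker E.mulVecLin = ⊥)
    (hrankB : B.rank = m)
    (hABinf : LinearMap.ker A.mulVecLin ⊓ LinearMap.ker B.mulVecLin = ⊥)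
    (hABsum : LinearMap.ker A.mulVecLin ⊔ LinearMap.ker B.mulVecLin = ⊤)
    (hran : LinearMap.range B.mulVecLin ⊓ LinearMap.range Cᵀ.mulVecLin = ⊥)
    (K : Matrix (Fin n ⊕ (Fin m ⊕ Fin p)) (Fin n ⊕ (Fin m ⊕ Fin p)) ℝ)
    (hKdef : K = Matrix.fromBlocks A (Matrix.fromCols Bᵀ 0) (Matrix.fromRows B 0)
      (Matrix.fromBlocks (-D) Cᵀ C E)) :
    IsUnit K := by
  -- B is surjective
  have hBsurj : LinearMap.range B.mulVecLin = ⊤ := by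
    apply Submodule.eq_top_of_finrank_eq
    rw [← Matrix.rank, hrankB, Module.finrank_fintype_fun_eq_card, Fintype.card_fin]
  -- Cᵀ = 0
  have hCt : Cᵀ = (0 : Matrix (Fin m) (Fin p) ℝ) := by
    rw [hBsurj, top_inf_eq, LinearMap.range_eq_bot] at hran
    ext i j
    have := congrFun (LinearMap.congr_fun hran (Pi.single j 1)) i
    simpa using this
  have hC : C = 0 := by
    have := congrArg Matrix.transpose hCt
    simpa using this
  -- E is injective on vectors
  have hEker : LinearMap.ker E.mulVecLin = ⊥ := by
    rw [hCt] at hCE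
    simpa using hCE
  -- A is symmetric
  have hAsymm : Aᵀ = A := by
    have := hA.1
    rwa [Matrix.IsHermitian, Matrix.conjTranspose_eq_transpose_of_trivial] at this
  subst hKdef
  rw [Matrix.isUnit_iff_isUnit_det, isUnit_iff_ne_zero]
  intro hdet
  obtain ⟨v, hv, hKv⟩ := (Matrix.exists_mulVec_eq_zero_iff).mpr hdet
  apply hv
  set x : Fin n → ℝ := v ∘ Sum.inl with hx
  set y : Fin m → ℝ := v ∘ Sum.inr ∘ Sum.inl with hy
  set w : Fin p → ℝ := v ∘ Sum.inr ∘ Sum.inr with hw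
  have hvdecomp : v = Sum.elim x (Sum.elim y w) := by
    ext (i | (j | k)) <;> rfl
  rw [hvdecomp, Matrix.fromBlocks_mulVec] at hKv
  -- extract the three equations
  have eq1 : A *ᵥ x + Bᵀ *ᵥ y = 0 := by
    funext i
    have := congrFun hKv (Sum.inl i)
    simpa using this
  have eq23 : B *ᵥ x + ((-D) *ᵥ y + Cᵀ *ᵥ w) = 0 ∧ (0 : Fin p → ℝ) + (C *ᵥ y + E *ᵥ w) = 0 := by
    constructor
    · funext i
      have := congrFun hKv (Sum.inr (Sum.inl i))
      simpa [Matrix.fromBlocks_mulVec] using this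
    · funext i
      have := congrFun hKv (Sum.inr (Sum.inr i))
      simpa [Matrix.fromBlocks_mulVec] using this
  obtain ⟨eq2, eq3⟩ := eq23
  -- y = 0
  have hy0 : y = 0 := by
    rw [← dotProduct_self_eq_zero (v := y)]
    -- y ∈ range B, write y = B *ᵥ u
    have : y ∈ LinearMap.range B.mulVecLin := hBsurj ▸ Submodule.mem_top
    obtain ⟨u, hu⟩ := this
    -- decompose u
    have hmem : u ∈ LinearMap.ker A.mulVecLin ⊔ LinearMap.ker B.mulVecLin :=
      hABsum ▸ Submodule.mem_top
    obtain ⟨ua, hua, ub, hub, huab⟩ := Submodule.mem_sup.mp hmem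
    have hua' : A *ᵥ ua = 0 := hua
    have hub' : B *ᵥ ub = 0 := hub
    have hBu : B *ᵥ u = y := hu
    calc y ⬝ᵥ y = (B *ᵥ u) ⬝ᵥ y := by rw [hBu]
      _ = (B *ᵥ ua) ⬝ᵥ y + (B *ᵥ ub) ⬝ᵥ y := by
          rw [← add_dotProduct, ← Matrix.mulVec_add, huab]
      _ = (B *ᵥ ua) ⬝ᵥ y := by rw [hub', zero_dotProduct, add_zero]
      _ = ua ⬝ᵥ (Bᵀ *ᵥ y) := by
          rw [Matrix.dotProduct_mulVec, Matrix.vecMul_transpose]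
      _ = - (ua ⬝ᵥ (A *ᵥ x)) := by
          have : Bᵀ *ᵥ y = - (A *ᵥ x) := by
            rw [eq_neg_iff_add_eq_zero, add_comm]; exact eq1
          rw [this, dotProduct_neg]
      _ = 0 := by
          rw [Matrix.dotProduct_mulVec,
            show ua ᵥ* A = A *ᵥ ua from by rw [← hAsymm, Matrix.vecMul_transpose, hAsymm], hua',
            zero_dotProduct, neg_zero]
  -- w = 0
  have hw0 : w = 0 := by
    have : E *ᵥ w = 0 := by
      have := eq3
      rw [hC] at this
      simpa using this
    have : w ∈ LinearMap.ker E.mulVecLin := this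
    rw [hEker] at this
    simpa using this
  -- x = 0
  have hx0 : x = 0 := by
    have h1 : A *ᵥ x = 0 := by
      have := eq1
      rw [hy0] at this
      simpa using this
    have h2 : B *ᵥ x = 0 := by
      have := eq2
      rw [hy0, hCt, hw0] at this
      simpa using this
    have : x ∈ LinearMap.ker A.mulVecLin ⊓ LinearMap.ker B.mulVecLin := ⟨h1, h2⟩
    rw [hABinf] at this
    simpa using this
  rw [hvdecomp, hx0, hy0, hw0]
  ext (i | (j | k)) <;> rfl
end

section
/- Suppose E = 0, n ≥ m, rank(B) = m, ker(A) ⊕ ker(B) = ℝⁿ, A symmetric positive semidefinite, and ker(Cᵀ) = {0} (so that ker(Cᵀ) ∩ ker(E) = {0}). If K is invertible, then ran(B) ∩ ran(Cᵀ) = {0}. -/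
open Matrix

theorem stmt_11 (n m p : ℕ) (hnm : n ≥ m)
    (A : Matrix (Fin n) (Fin n) ℝ) (D : Matrix (Fin m) (Fin m) ℝ)
    (B : Matrix (Fin m) (Fin n) ℝ) (C : Matrix (Fin p) (Fin m) ℝ)
    (hA : A.PosSemidef) (hD : D.IsSymm)
    (hrankB : B.rank = m)
    (hABinf : LinearMap.ker A.mulVecLin ⊓ LinearMap.ker B.mulVecLin = ⊥)
    (hABsum : LinearMap.ker A.mulVecLin ⊔ LinearMap.ker B.mulVecLin = ⊤)
    (hCT : LinearMap.ker Cᵀ.mulVecLin = ⊥)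
    (K : Matrix (Fin n ⊕ (Fin m ⊕ Fin p)) (Fin n ⊕ (Fin m ⊕ Fin p)) ℝ)
    (hKdef : K = Matrix.fromBlocks A (Matrix.fromCols Bᵀ 0) (Matrix.fromRows B 0)
      (Matrix.fromBlocks (-D) Cᵀ C 0))
    (hK : IsUnit K) :
    LinearMap.range B.mulVecLin ⊓ LinearMap.range Cᵀ.mulVecLin = ⊥ := by
  -- dimension computations
  have hrnB := LinearMap.finrank_range_add_finrank_ker B.mulVecLin
  have hRB : Module.finrank ℝ (LinearMap.range B.mulVecLin) = m := hrankB
  rw [hRB, Module.finrank_pi, Fintype.card_fin] at hrnB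
  have hsum := Submodule.finrank_sup_add_finrank_inf_eq (LinearMap.ker A.mulVecLin)
    (LinearMap.ker B.mulVecLin)
  rw [hABsum, hABinf, finrank_top, finrank_bot, Module.finrank_pi, Fintype.card_fin] at hsum
  have hKAdim : Module.finrank ℝ (LinearMap.ker A.mulVecLin) = m := by omega
  -- B maps ker A onto all of ℝ^m
  have hmap : Submodule.map B.mulVecLin (LinearMap.ker A.mulVecLin) = ⊤ := by
    have hker : LinearMap.ker (B.mulVecLin.domRestrict (LinearMap.ker A.mulVecLin)) = ⊥ := by
      rw [LinearMap.ker_eq_bot']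
      rintro ⟨x, hx⟩ hbx
      have hmem : x ∈ LinearMap.ker A.mulVecLin ⊓ LinearMap.ker B.mulVecLin := ⟨hx, hbx⟩
      rw [hABinf] at hmem
      exact Subtype.ext (by simpa using hmem)
    have hrn := LinearMap.finrank_range_add_finrank_ker
      (B.mulVecLin.domRestrict (LinearMap.ker A.mulVecLin))
    rw [hker, finrank_bot, hKAdim, add_zero] at hrn
    have hrange : LinearMap.range (B.mulVecLin.domRestrict (LinearMap.ker A.mulVecLin)) =
        Submodule.map B.mulVecLin (LinearMap.ker A.mulVecLin) := by
      ext w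
      simp [LinearMap.mem_range, Submodule.mem_map]
    rw [hrange] at hrn
    apply Submodule.eq_top_of_finrank_eq
    rw [hrn, Module.finrank_pi, Fintype.card_fin]
  have hBsurj : ∀ w : Fin m → ℝ, ∃ x, A.mulVec x = 0 ∧ B.mulVec x = w := by
    intro w
    have hw : w ∈ Submodule.map B.mulVecLin (LinearMap.ker A.mulVecLin) :=
      hmap ▸ Submodule.mem_top
    obtain ⟨x, hx, hbx⟩ := hw
    exact ⟨x, by simpa using hx, hbx⟩
  -- main argument
  rw [eq_bot_iff]
  rintro w ⟨-, hw2⟩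
  obtain ⟨z, rfl⟩ := hw2
  obtain ⟨x, hAx, hBx⟩ := hBsurj (-(Cᵀ.mulVec z))
  set v : (Fin n ⊕ (Fin m ⊕ Fin p)) → ℝ := Sum.elim x (Sum.elim 0 z) with hv
  have hKv : K.mulVec v = 0 := by
    rw [hKdef, hv]
    simp only [fromBlocks_mulVec, fromRows_mulVec, fromCols_mulVec_sumElim,
      Sum.elim_comp_inl, Sum.elim_comp_inr, mulVec_zero, zero_mulVec, hAx, hBx,
      add_zero, zero_add]
    funext i
    cases i with
    | inl i => simp
    | inr i => cases i <;> simp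
  have hinj : Function.Injective K.mulVec := mulVec_injective_iff_isUnit.2 hK
  have hv0 : v = 0 := by
    apply hinj
    rw [hKv, mulVec_zero]
  have hz : z = 0 := by
    funext j
    have := congrFun hv0 (Sum.inr (Sum.inr j))
    simpa [hv] using this
  simp [hz, Matrix.mulVecLin_apply]
end

section
/- Suppose A is symmetric positive semidefinite with nullity(A) = m, ker(A) ∩ ker(B) = {0}, and W ∈ ℝ^{m×m} is invertible. Then A + BᵀW⁻¹B is invertible and B(A + BᵀW⁻¹B)⁻¹Bᵀ = W. -/
open Matrix

lemma aux_mulVec_ext_zero {p q : ℕ} (M : Matrix (Fin p) (Fin q) ℝ)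
    (h : ∀ y, M *ᵥ y = 0) : M = 0 := by
  ext i j
  have := congrFun (h (Pi.single j 1)) i
  simpa [Matrix.mulVec_single] using this

lemma aux_mulVec_ext_one {p : ℕ} (M : Matrix (Fin p) (Fin p) ℝ)
    (h : ∀ y, M *ᵥ y = y) : M = 1 := by
  ext i j
  have := congrFun (h (Pi.single j 1)) i
  simpa [Matrix.mulVec_single, Matrix.one_apply, Pi.single_apply, eq_comm] using this

theorem stmt_13 (n m : ℕ)
    (A : Matrix (Fin n) (Fin n) ℝ) (B : Matrix (Fin m) (Fin n) ℝ)
    (W : Matrix (Fin m) (Fin m) ℝ)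
    (hA : A.PosSemidef)
    (hnull : Module.finrank ℝ (LinearMap.ker A.mulVecLin) = m)
    (hAB : LinearMap.ker A.mulVecLin ⊓ LinearMap.ker B.mulVecLin = ⊥)
    (hW : IsUnit W) :
    IsUnit (A + Bᵀ * W⁻¹ * B) ∧ B * (A + Bᵀ * W⁻¹ * B)⁻¹ * Bᵀ = W := by
  classical
  set S := LinearMap.ker A.mulVecLin with hS
  let φ : S →ₗ[ℝ] (Fin m → ℝ) := B.mulVecLin.domRestrict S
  have hφinj : Function.Injective φ := by
    rw [← LinearMap.ker_eq_bot]
    ext ⟨x, hx⟩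
    simp only [LinearMap.mem_ker, LinearMap.domRestrict_apply, Submodule.mem_bot,
      Submodule.mk_eq_zero, φ]
    constructor
    · intro h
      have : x ∈ S ⊓ LinearMap.ker B.mulVecLin := ⟨hx, h⟩
      rw [hAB] at this
      simpa using this
    · rintro rfl; simp
  have hdim : Module.finrank ℝ S = Module.finrank ℝ (Fin m → ℝ) := by
    simp [hnull]
  let e : S ≃ₗ[ℝ] (Fin m → ℝ) := φ.linearEquivOfInjective hφinj hdim
  let g : (Fin m → ℝ) →ₗ[ℝ] (Fin n → ℝ) := S.subtype ∘ₗ e.symm.toLinearMap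
  let K : Matrix (Fin n) (Fin m) ℝ := LinearMap.toMatrix' g
  have hKg : K.mulVecLin = g := by
    rw [← Matrix.toLin'_apply']
    exact Matrix.toLin'_toMatrix' g
  have hKapp : ∀ y, K *ᵥ y = g y := fun y => congrFun (congrArg DFunLike.coe hKg) y
  have hAT : Aᵀ = A := by
    have := hA.1.eq
    rwa [Matrix.conjTranspose] at this
  have hAK : A * K = 0 := by
    apply aux_mulVec_ext_zero
    intro y
    rw [← Matrix.mulVec_mulVec, hKapp]
    exact (e.symm y).2
  have hBK : B * K = 1 := by
    apply aux_mulVec_ext_one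
    intro y
    rw [← Matrix.mulVec_mulVec, hKapp]
    have h2 : B *ᵥ (g y) = φ (e.symm y) := rfl
    have h3 : φ (e.symm y) = y := by
      rw [← φ.linearEquivOfInjective_apply hφinj hdim]
      exact e.apply_symm_apply y
    rw [h2, h3]
  have hWW : W * W⁻¹ = 1 := Matrix.mul_nonsing_inv W ((Matrix.isUnit_iff_isUnit_det W).mp hW)
  have hWW' : W⁻¹ * W = 1 := Matrix.nonsing_inv_mul W ((Matrix.isUnit_iff_isUnit_det W).mp hW)
  set M := A + Bᵀ * W⁻¹ * B with hM
  have hKM : Kᵀ * M = W⁻¹ * B := by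
    have hKA : Kᵀ * A = 0 := by
      have h : Kᵀ * A = (Aᵀ * K)ᵀ := by rw [Matrix.transpose_mul, Matrix.transpose_transpose]
      rw [h, hAT, hAK, Matrix.transpose_zero]
    have hKB : Kᵀ * Bᵀ = 1 := by
      have h : Kᵀ * Bᵀ = (B * K)ᵀ := by rw [Matrix.transpose_mul]
      rw [h, hBK, Matrix.transpose_one]
    rw [hM, Matrix.mul_add, hKA, ← Matrix.mul_assoc, ← Matrix.mul_assoc, hKB, zero_add, Matrix.one_mul]
  have hMunit : IsUnit M := by
    rw [← Matrix.mulVec_injective_iff_isUnit]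
    intro x y hxy
    have hker : ∀ z, M *ᵥ z = 0 → z = 0 := by
      intro z hz
      have h1 : (W⁻¹ * B) *ᵥ z = 0 := by
        rw [← hKM, ← Matrix.mulVec_mulVec, hz, Matrix.mulVec_zero]
      have hBz : B *ᵥ z = 0 := by
        have h2 : W *ᵥ ((W⁻¹ * B) *ᵥ z) = 0 := by rw [h1, Matrix.mulVec_zero]
        rwa [Matrix.mulVec_mulVec, ← Matrix.mul_assoc, hWW, Matrix.one_mul] at h2
      have hAz : A *ᵥ z = 0 := by
        have hsum : A *ᵥ z + (Bᵀ * W⁻¹ * B) *ᵥ z = 0 := by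
          rw [← Matrix.add_mulVec, ← hM, hz]
        have hBz' : (Bᵀ * W⁻¹ * B) *ᵥ z = 0 := by
          rw [Matrix.mul_assoc, ← Matrix.mulVec_mulVec, ← Matrix.mulVec_mulVec, hBz]
          simp
        rw [hBz'] at hsum
        simpa using hsum
      have hmem : z ∈ S ⊓ LinearMap.ker B.mulVecLin := ⟨hAz, hBz⟩
      rw [hAB] at hmem
      simpa using hmem
    have hz : M *ᵥ (x - y) = 0 := by
      rw [Matrix.mulVec_sub, hxy, sub_self]
    exact sub_eq_zero.mp (hker _ hz)
  refine ⟨hMunit, ?_⟩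
  have hMK : M * K = Bᵀ * W⁻¹ := by
    rw [hM, Matrix.add_mul, hAK, zero_add, Matrix.mul_assoc, hBK, Matrix.mul_one]
  have hMM : M⁻¹ * M = 1 := Matrix.nonsing_inv_mul M ((Matrix.isUnit_iff_isUnit_det M).mp hMunit)
  have hKeq : K = M⁻¹ * (Bᵀ * W⁻¹) := by
    rw [← hMK, ← Matrix.mul_assoc, hMM, Matrix.one_mul]
  have hfin : B * M⁻¹ * Bᵀ * W⁻¹ = 1 := by
    calc B * M⁻¹ * Bᵀ * W⁻¹ = B * (M⁻¹ * (Bᵀ * W⁻¹)) := by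
          simp only [Matrix.mul_assoc]
    _ = B * K := by rw [← hKeq]
    _ = 1 := hBK
  calc B * M⁻¹ * Bᵀ = B * M⁻¹ * Bᵀ * (W⁻¹ * W) := by
        simp only [hWW', Matrix.mul_one]
  _ = (B * M⁻¹ * Bᵀ * W⁻¹) * W := by simp only [Matrix.mul_assoc]
  _ = 1 * W := by rw [hfin]
  _ = W := Matrix.one_mul W
end

section
/- Let A, D be symmetric positive semidefinite with nullity(A) = m, suppose the three kernel-intersection conditions ker(A)∩ker(B)={0}, ker(Bᵀ)∩ker(D)∩ker(C)={0}, ker(Cᵀ)∩ker(E)={0} hold, and suppose λ_max(D) < 2. Then E is invertible if and only if K is invertible. -/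
open Matrix

theorem stmt_14 (n m p : ℕ)
    (A : Matrix (Fin n) (Fin n) ℝ) (D : Matrix (Fin m) (Fin m) ℝ)
    (E : Matrix (Fin p) (Fin p) ℝ)
    (B : Matrix (Fin m) (Fin n) ℝ) (C : Matrix (Fin p) (Fin m) ℝ)
    (hA : A.PosSemidef) (hD : D.PosSemidef) (hE : E.IsSymm)
    (hnullA : Module.finrank ℝ (LinearMap.ker A.mulVecLin) = m)
    (hAB : LinearMap.ker A.mulVecLin ⊓ LinearMap.ker B.mulVecLin = ⊥)
    (hker : LinearMap.ker Bᵀ.mulVecLin ⊓ LinearMap.ker D.mulVecLin ⊓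
      LinearMap.ker C.mulVecLin = ⊥)
    (hCE : LinearMap.ker Cᵀ.mulVecLin ⊓ LinearMap.ker E.mulVecLin = ⊥)
    (hDmax : ∀ i, hD.1.eigenvalues i < 2)
    (K : Matrix (Fin n ⊕ (Fin m ⊕ Fin p)) (Fin n ⊕ (Fin m ⊕ Fin p)) ℝ)
    (hKdef : K = Matrix.fromBlocks A (Matrix.fromCols Bᵀ 0) (Matrix.fromRows B 0)
      (Matrix.fromBlocks (-D) Cᵀ C E)) :
    IsUnit E ↔ IsUnit K := by
  subst hKdef
  -- symmetry of A
  have hAs : Aᵀ = A := by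
    have := hA.1
    simpa [Matrix.IsHermitian, Matrix.conjTranspose_eq_transpose_of_trivial] using this
  -- the restriction of B to ker A
  set f : (LinearMap.ker A.mulVecLin) →ₗ[ℝ] (Fin m → ℝ) :=
    B.mulVecLin ∘ₗ (LinearMap.ker A.mulVecLin).subtype with hf
  have hf_inj : Function.Injective f := by
    rw [← LinearMap.ker_eq_bot, LinearMap.ker_eq_bot']
    rintro ⟨x, hx⟩ hfx
    have hxB : B *ᵥ x = 0 := by simpa [hf] using hfx
    have : x ∈ LinearMap.ker A.mulVecLin ⊓ LinearMap.ker B.mulVecLin :=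
      ⟨hx, by simpa [LinearMap.mem_ker] using hxB⟩
    rw [hAB] at this
    exact Subtype.ext (by simpa using this)
  have hf_surj : Function.Surjective f := by
    have hdim : Module.finrank ℝ (LinearMap.ker A.mulVecLin)
        = Module.finrank ℝ (Fin m → ℝ) := by
      rw [hnullA, Module.finrank_fin_fun]
    exact (LinearMap.injective_iff_surjective_of_finrank_eq_finrank hdim).mp hf_inj
  -- key lemma: if Bᵀ v lies in the range of A then v = 0
  have L1 : ∀ (v : Fin m → ℝ) (u : Fin n → ℝ), Bᵀ *ᵥ v = A *ᵥ u → v = 0 := by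
    intro v u h
    obtain ⟨⟨x, hxA⟩, hx⟩ := hf_surj v
    have hBx : B *ᵥ x = v := by simpa [hf] using hx
    have hAx : A *ᵥ x = 0 := by simpa [LinearMap.mem_ker] using hxA
    have : v ⬝ᵥ v = 0 := by
      calc v ⬝ᵥ v = v ⬝ᵥ (B *ᵥ x) := by rw [hBx]
        _ = (v ᵥ* B) ⬝ᵥ x := dotProduct_mulVec v B x
        _ = (Bᵀ *ᵥ v) ⬝ᵥ x := by rw [mulVec_transpose]
        _ = (A *ᵥ u) ⬝ᵥ x := by rw [h]
        _ = (A *ᵥ x) ⬝ᵥ u := by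
              rw [dotProduct_comm, dotProduct_mulVec, ← mulVec_transpose, hAs]
        _ = 0 := by rw [hAx, zero_dotProduct]
    exact dotProduct_self_eq_zero.mp this
  constructor
  · -- E invertible → K invertible
    intro hEu
    rw [← Matrix.mulVec_injective_iff_isUnit] at hEu ⊢
    have hker0 : ∀ z, (Matrix.fromBlocks A (Matrix.fromCols Bᵀ 0) (Matrix.fromRows B 0)
        (Matrix.fromBlocks (-D) Cᵀ C E)) *ᵥ z = 0 → z = 0 := by
      intro z hz
      set x : Fin n → ℝ := z ∘ Sum.inl with hxdef
      set y : Fin m → ℝ := z ∘ Sum.inr ∘ Sum.inl with hydef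
      set w : Fin p → ℝ := z ∘ Sum.inr ∘ Sum.inr with hwdef
      have hzin : z ∘ Sum.inr = Sum.elim y w := by
        funext j; rcases j with j | j <;> rfl
      rw [fromBlocks_mulVec] at hz
      have E1 : A *ᵥ x + Bᵀ *ᵥ y + 0 *ᵥ w = 0 := by
        funext i
        have := congrFun hz (Sum.inl i)
        simpa [hzin, add_assoc] using this
      have E1' : A *ᵥ x + Bᵀ *ᵥ y = 0 := by simpa using E1
      have E2 : B *ᵥ x + (-D *ᵥ y + Cᵀ *ᵥ w) = 0 := by
        funext i
        have := congrFun hz (Sum.inr (Sum.inl i))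
        simpa [hzin, fromBlocks_mulVec] using this
      have E3 : C *ᵥ y + E *ᵥ w = 0 := by
        funext i
        have := congrFun hz (Sum.inr (Sum.inr i))
        simpa [hzin, fromBlocks_mulVec] using this
      have hy : y = 0 := by
        apply L1 y (-x)
        rw [mulVec_neg, eq_neg_iff_add_eq_zero, add_comm]
        exact E1'
      have hAx : A *ᵥ x = 0 := by simpa [hy] using E1'
      have hw : w = 0 := by
        apply hEu
        have : E *ᵥ w = 0 := by simpa [hy] using E3
        simpa [this]
      have hBx : B *ᵥ x = 0 := by simpa [hy, hw] using E2
      have hx0 : x = 0 := by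
        have : x ∈ LinearMap.ker A.mulVecLin ⊓ LinearMap.ker B.mulVecLin :=
          ⟨by simpa [LinearMap.mem_ker] using hAx, by simpa [LinearMap.mem_ker] using hBx⟩
        rw [hAB] at this
        simpa using this
      funext i
      rcases i with i | i | i
      · exact congrFun hx0 i
      · exact congrFun hy i
      · exact congrFun hw i
    intro a b hab
    exact sub_eq_zero.mp (hker0 (a - b) (by rw [Matrix.mulVec_sub, hab, sub_self]))
  · -- K invertible → E invertible
    intro hKu
    rw [← Matrix.mulVec_injective_iff_isUnit] at hKu ⊢
    have hker0 : ∀ w, E *ᵥ w = 0 → w = 0 := by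
      intro w hw
      obtain ⟨⟨x, hxA⟩, hx⟩ := hf_surj (-(Cᵀ *ᵥ w))
      have hBx : B *ᵥ x = -(Cᵀ *ᵥ w) := by simpa [hf] using hx
      have hAx : A *ᵥ x = 0 := by simpa [LinearMap.mem_ker] using hxA
      set z : (Fin n ⊕ (Fin m ⊕ Fin p)) → ℝ := Sum.elim x (Sum.elim 0 w) with hzdef
      have hz : (Matrix.fromBlocks A (Matrix.fromCols Bᵀ 0) (Matrix.fromRows B 0)
          (Matrix.fromBlocks (-D) Cᵀ C E)) *ᵥ z = 0 := by
        rw [hzdef, fromBlocks_mulVec]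
        funext i
        rcases i with i | i | i
        · simpa using congrFun (show A *ᵥ x + (Matrix.fromCols Bᵀ 0) *ᵥ (Sum.elim 0 w)
            = 0 by rw [fromCols_mulVec_sumElim]; simp [hAx]) i
        · simp [fromBlocks_mulVec, fromRows_mulVec, hBx]
        · simp [fromBlocks_mulVec, fromRows_mulVec, hw]
      have hz0 : z = 0 := hKu (by simpa using hz)
      funext i
      exact congrFun hz0 (Sum.inr (Sum.inr i))
    intro a b hab
    exact sub_eq_zero.mp (hker0 (a - b) (by rw [Matrix.mulVec_sub, hab, sub_self]))
end

section
/- Let K be invertible with inverse partitioned conformally as Z = [[Z₁₁,Z₁₂,Z₁₃],[Z₂₁,Z₂₂,Z₂₃],[Z₃₁,Z₃₂,Z₃₃]]. Then min{max{nullity(A), nullity(E)}, m} ≤ nullity(Z₂₂) ≤ nullity(A) + nullity(E). If moreover ran(B) ∩ ran(Cᵀ) = {0}, then min{nullity(A)+nullity(E), m} ≤ nullity(Z₂₂). -/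
open Matrix

theorem stmt_15 (n m p : ℕ)
    (A : Matrix (Fin n) (Fin n) ℝ) (D : Matrix (Fin m) (Fin m) ℝ)
    (E : Matrix (Fin p) (Fin p) ℝ)
    (B : Matrix (Fin m) (Fin n) ℝ) (C : Matrix (Fin p) (Fin m) ℝ)
    (K : Matrix (Fin n ⊕ (Fin m ⊕ Fin p)) (Fin n ⊕ (Fin m ⊕ Fin p)) ℝ)
    (hKdef : K = Matrix.fromBlocks A (Matrix.fromCols Bᵀ 0) (Matrix.fromRows B 0)
      (Matrix.fromBlocks (-D) Cᵀ C E))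
    (hK : IsUnit K)
    (Z₂₂ : Matrix (Fin m) (Fin m) ℝ)
    (hZ₂₂def : Z₂₂ = Matrix.of fun i j => K⁻¹ (Sum.inr (Sum.inl i)) (Sum.inr (Sum.inl j))) :
    (min (max (Module.finrank ℝ (LinearMap.ker A.mulVecLin))
          (Module.finrank ℝ (LinearMap.ker E.mulVecLin))) m ≤
        Module.finrank ℝ (LinearMap.ker Z₂₂.mulVecLin) ∧
      Module.finrank ℝ (LinearMap.ker Z₂₂.mulVecLin) ≤
        Module.finrank ℝ (LinearMap.ker A.mulVecLin) +
          Module.finrank ℝ (LinearMap.ker E.mulVecLin)) ∧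
    (LinearMap.range B.mulVecLin ⊓ LinearMap.range Cᵀ.mulVecLin = ⊥ →
      min (Module.finrank ℝ (LinearMap.ker A.mulVecLin) +
          Module.finrank ℝ (LinearMap.ker E.mulVecLin)) m ≤
        Module.finrank ℝ (LinearMap.ker Z₂₂.mulVecLin)) := by
  set Z := K⁻¹ with hZ
  have hdet : IsUnit K.det := (Matrix.isUnit_iff_isUnit_det K).mp hK
  have hKZ : K * Z = 1 := Matrix.mul_nonsing_inv K hdet
  have hZK : Z * K = 1 := Matrix.nonsing_inv_mul K hdet
  have hZKvec : ∀ v, Z *ᵥ (K *ᵥ v) = v := by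
    intro v; rw [Matrix.mulVec_mulVec, hZK, Matrix.one_mulVec]
  have hKZvec : ∀ v, K *ᵥ (Z *ᵥ v) = v := by
    intro v; rw [Matrix.mulVec_mulVec, hKZ, Matrix.one_mulVec]
  -- block action of K
  have hKmul : ∀ (u : Fin n → ℝ) (x : Fin m → ℝ) (w : Fin p → ℝ),
      K *ᵥ (Sum.elim u (Sum.elim x w)) =
        Sum.elim (A *ᵥ u + Bᵀ *ᵥ x)
          (Sum.elim (B *ᵥ u + (-(D *ᵥ x) + Cᵀ *ᵥ w)) (C *ᵥ x + E *ᵥ w)) := by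
    intro u x w
    subst hKdef
    funext i
    rcases i with i | i | i <;>
      simp [Matrix.fromBlocks_mulVec, Matrix.fromCols_mulVec_sumElim,
        Matrix.fromRows_mulVec, Matrix.neg_mulVec, Matrix.zero_mulVec]
  -- blocks of Z
  set Z₁₂ : Matrix (Fin n) (Fin m) ℝ :=
    Matrix.of fun i j => Z (Sum.inl i) (Sum.inr (Sum.inl j)) with hZ₁₂def
  set Z₃₂ : Matrix (Fin p) (Fin m) ℝ :=
    Matrix.of fun i j => Z (Sum.inr (Sum.inr i)) (Sum.inr (Sum.inl j)) with hZ₃₂def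
  have hZmul : ∀ (x : Fin m → ℝ),
      Z *ᵥ (Sum.elim 0 (Sum.elim x 0)) =
        Sum.elim (Z₁₂ *ᵥ x) (Sum.elim (Z₂₂ *ᵥ x) (Z₃₂ *ᵥ x)) := by
    intro x
    funext i
    rcases i with i | i | i <;>
      simp [Matrix.mulVec, dotProduct, Fintype.sum_sum_type, hZ₂₂def, hZ₁₂def, hZ₃₂def]
  -- Fact 1 : u ∈ ker A
  have F1 : ∀ u : Fin n → ℝ, A *ᵥ u = 0 →
      Z₁₂ *ᵥ (B *ᵥ u) = u ∧ Z₂₂ *ᵥ (B *ᵥ u) = 0 := by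
    intro u hu
    have h1 : K *ᵥ (Sum.elim u (Sum.elim (0 : Fin m → ℝ) (0 : Fin p → ℝ))) =
        Sum.elim (0 : Fin n → ℝ) (Sum.elim (B *ᵥ u) (0 : Fin p → ℝ)) := by
      rw [hKmul]; simp [hu]
    have h2 : Z *ᵥ (Sum.elim (0 : Fin n → ℝ) (Sum.elim (B *ᵥ u) (0 : Fin p → ℝ))) =
        Sum.elim u (Sum.elim (0 : Fin m → ℝ) (0 : Fin p → ℝ)) := by
      rw [← h1, hZKvec]
    rw [hZmul] at h2
    constructor
    · funext i; exact congrFun h2 (Sum.inl i)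
    · funext i; exact congrFun h2 (Sum.inr (Sum.inl i))
  -- Fact 2 : w ∈ ker E
  have F2 : ∀ w : Fin p → ℝ, E *ᵥ w = 0 →
      Z₃₂ *ᵥ (Cᵀ *ᵥ w) = w ∧ Z₂₂ *ᵥ (Cᵀ *ᵥ w) = 0 := by
    intro w hw
    have h1 : K *ᵥ (Sum.elim (0 : Fin n → ℝ) (Sum.elim (0 : Fin m → ℝ) w)) =
        Sum.elim (0 : Fin n → ℝ) (Sum.elim (Cᵀ *ᵥ w) (0 : Fin p → ℝ)) := by
      rw [hKmul]; simp [hw]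
    have h2 : Z *ᵥ (Sum.elim (0 : Fin n → ℝ) (Sum.elim (Cᵀ *ᵥ w) (0 : Fin p → ℝ))) =
        Sum.elim (0 : Fin n → ℝ) (Sum.elim (0 : Fin m → ℝ) w) := by
      rw [← h1, hZKvec]
    rw [hZmul] at h2
    constructor
    · funext i; exact congrFun h2 (Sum.inr (Sum.inr i))
    · funext i; exact congrFun h2 (Sum.inr (Sum.inl i))
  -- Fact 3 : x ∈ ker Z₂₂
  have F3 : ∀ x : Fin m → ℝ, Z₂₂ *ᵥ x = 0 →
      A *ᵥ (Z₁₂ *ᵥ x) = 0 ∧ E *ᵥ (Z₃₂ *ᵥ x) = 0 ∧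
        B *ᵥ (Z₁₂ *ᵥ x) + Cᵀ *ᵥ (Z₃₂ *ᵥ x) = x := by
    intro x hx
    have h1 : K *ᵥ (Z *ᵥ (Sum.elim (0 : Fin n → ℝ) (Sum.elim x (0 : Fin p → ℝ)))) =
        Sum.elim (0 : Fin n → ℝ) (Sum.elim x (0 : Fin p → ℝ)) :=
      hKZvec _
    rw [hZmul, hx, hKmul] at h1
    refine ⟨?_, ?_, ?_⟩
    · funext i
      have := congrFun h1 (Sum.inl i)
      simpa using this
    · funext i
      have := congrFun h1 (Sum.inr (Sum.inr i))
      simpa using this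
    · funext i
      have := congrFun h1 (Sum.inr (Sum.inl i))
      simpa using this
  -- abbreviations
  set kA := LinearMap.ker A.mulVecLin
  set kE := LinearMap.ker E.mulVecLin
  set kZ := LinearMap.ker Z₂₂.mulVecLin
  -- φ : kA →ₗ kZ
  let φ : kA →ₗ[ℝ] kZ :=
    LinearMap.codRestrict kZ (B.mulVecLin ∘ₗ kA.subtype) (fun v => by
      have hv : A *ᵥ (v : Fin n → ℝ) = 0 := v.2
      exact LinearMap.mem_ker.mpr ((F1 v hv).2))
  have hφinj : Function.Injective φ := by
    intro v v' hvv'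
    have hB : B *ᵥ (v : Fin n → ℝ) = B *ᵥ (v' : Fin n → ℝ) :=
      congrArg Subtype.val hvv' 
    have hv : A *ᵥ (v : Fin n → ℝ) = 0 := v.2
    have hv' : A *ᵥ (v' : Fin n → ℝ) = 0 := v'.2
    have : (v : Fin n → ℝ) = v' := by
      rw [← (F1 v hv).1, ← (F1 v' hv').1, hB]
    exact Subtype.ext this
  have h1 : Module.finrank ℝ kA ≤ Module.finrank ℝ kZ :=
    LinearMap.finrank_le_finrank_of_injective hφinj
  -- ψ : kE →ₗ kZ
  let ψ : kE →ₗ[ℝ] kZ :=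
    LinearMap.codRestrict kZ (Cᵀ.mulVecLin ∘ₗ kE.subtype) (fun v => by
      have hv : E *ᵥ (v : Fin p → ℝ) = 0 := v.2
      exact LinearMap.mem_ker.mpr ((F2 v hv).2))
  have hψinj : Function.Injective ψ := by
    intro v v' hvv'
    have hC : Cᵀ *ᵥ (v : Fin p → ℝ) = Cᵀ *ᵥ (v' : Fin p → ℝ) :=
      congrArg Subtype.val hvv' 
    have hv : E *ᵥ (v : Fin p → ℝ) = 0 := v.2
    have hv' : E *ᵥ (v' : Fin p → ℝ) = 0 := v'.2
    have : (v : Fin p → ℝ) = v' := by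
      rw [← (F2 v hv).1, ← (F2 v' hv').1, hC]
    exact Subtype.ext this
  have h2 : Module.finrank ℝ kE ≤ Module.finrank ℝ kZ :=
    LinearMap.finrank_le_finrank_of_injective hψinj
  -- θ : kZ →ₗ kA × kE
  let θ : kZ →ₗ[ℝ] kA × kE :=
    LinearMap.prod
      (LinearMap.codRestrict kA (Z₁₂.mulVecLin ∘ₗ kZ.subtype) (fun v => by
        have hv : Z₂₂ *ᵥ (v : Fin m → ℝ) = 0 := v.2
        exact LinearMap.mem_ker.mpr ((F3 v hv).1)))
      (LinearMap.codRestrict kE (Z₃₂.mulVecLin ∘ₗ kZ.subtype) (fun v => by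
        have hv : Z₂₂ *ᵥ (v : Fin m → ℝ) = 0 := v.2
        exact LinearMap.mem_ker.mpr ((F3 v hv).2.1)))
  have hθinj : Function.Injective θ := by
    intro v v' hvv'
    have h12 : Z₁₂ *ᵥ (v : Fin m → ℝ) = Z₁₂ *ᵥ (v' : Fin m → ℝ) :=
      congrArg (fun z : (kA × kE) => ((z.1 : Fin n → ℝ))) hvv' 
    have h32 : Z₃₂ *ᵥ (v : Fin m → ℝ) = Z₃₂ *ᵥ (v' : Fin m → ℝ) :=
      congrArg (fun z : (kA × kE) => ((z.2 : Fin p → ℝ))) hvv' 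
    have hv : Z₂₂ *ᵥ (v : Fin m → ℝ) = 0 := v.2
    have hv' : Z₂₂ *ᵥ (v' : Fin m → ℝ) = 0 := v'.2
    have : (v : Fin m → ℝ) = v' := by
      rw [← (F3 v hv).2.2, ← (F3 v' hv').2.2, h12, h32]
    exact Subtype.ext this
  have h3 : Module.finrank ℝ kZ ≤ Module.finrank ℝ kA + Module.finrank ℝ kE := by
    have := LinearMap.finrank_le_finrank_of_injective hθinj
    rwa [Module.finrank_prod] at this
  refine ⟨⟨le_trans (min_le_left _ _) (max_le h1 h2), h3⟩, ?_⟩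
  -- third part
  intro hdisj
  -- χ : kA × kE →ₗ kZ
  let χ : (kA × kE) →ₗ[ℝ] kZ :=
    LinearMap.codRestrict kZ
      ((B.mulVecLin ∘ₗ kA.subtype) ∘ₗ LinearMap.fst ℝ kA kE +
        (Cᵀ.mulVecLin ∘ₗ kE.subtype) ∘ₗ LinearMap.snd ℝ kA kE) (fun v => by
      have hu : A *ᵥ (v.1 : Fin n → ℝ) = 0 := v.1.2
      have hw : E *ᵥ (v.2 : Fin p → ℝ) = 0 := v.2.2
      have : Z₂₂ *ᵥ (B *ᵥ (v.1 : Fin n → ℝ) + Cᵀ *ᵥ (v.2 : Fin p → ℝ)) = 0 := by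
        rw [Matrix.mulVec_add, (F1 _ hu).2, (F2 _ hw).2, add_zero]
      exact LinearMap.mem_ker.mpr this)
  have hχinj : Function.Injective χ := by
    rw [← LinearMap.ker_eq_bot, LinearMap.ker_eq_bot']
    intro v hv0
    have hsum : B *ᵥ (v.1 : Fin n → ℝ) + Cᵀ *ᵥ (v.2 : Fin p → ℝ) = 0 :=
      congrArg Subtype.val hv0
    have hu : A *ᵥ (v.1 : Fin n → ℝ) = 0 := v.1.2
    have hw : E *ᵥ (v.2 : Fin p → ℝ) = 0 := v.2.2
    have hBmem : B *ᵥ (v.1 : Fin n → ℝ) ∈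
        LinearMap.range B.mulVecLin ⊓ LinearMap.range Cᵀ.mulVecLin := by
      constructor
      · exact ⟨(v.1 : Fin n → ℝ), rfl⟩
      · refine ⟨-(v.2 : Fin p → ℝ), ?_⟩
        have hBneg : B *ᵥ (v.1 : Fin n → ℝ) = -(Cᵀ *ᵥ (v.2 : Fin p → ℝ)) := by
          rw [eq_neg_iff_add_eq_zero]; exact hsum
        show Cᵀ.mulVecLin (-(v.2 : Fin p → ℝ)) = B *ᵥ (v.1 : Fin n → ℝ)
        rw [map_neg, Matrix.mulVecLin_apply, hBneg]
    rw [hdisj] at hBmem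
    have hB0 : B *ᵥ (v.1 : Fin n → ℝ) = 0 := hBmem
    have hC0 : Cᵀ *ᵥ (v.2 : Fin p → ℝ) = 0 := by
      have := hsum; rwa [hB0, zero_add] at this
    have hv1 : (v.1 : Fin n → ℝ) = 0 := by
      rw [← (F1 _ hu).1, hB0, Matrix.mulVec_zero]
    have hv2 : (v.2 : Fin p → ℝ) = 0 := by
      rw [← (F2 _ hw).1, hC0, Matrix.mulVec_zero]
    have : v = (0 : kA × kE) := by
      ext <;> simp [hv1, hv2]
    exact this
  have h4 : Module.finrank ℝ kA + Module.finrank ℝ kE ≤ Module.finrank ℝ kZ := by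
    have := LinearMap.finrank_le_finrank_of_injective hχinj
    rwa [Module.finrank_prod] at this
  exact le_trans (min_le_left _ _) h4
end

section
/- If K is invertible, nullity(A) = m, and E is invertible, then the middle diagonal block Z₂₂ (of size m×m) of K⁻¹ is the zero matrix. -/
open Matrix

theorem stmt_16 (n m p : ℕ)
    (A : Matrix (Fin n) (Fin n) ℝ) (D : Matrix (Fin m) (Fin m) ℝ)
    (E : Matrix (Fin p) (Fin p) ℝ)
    (B : Matrix (Fin m) (Fin n) ℝ) (C : Matrix (Fin p) (Fin m) ℝ)
    (K : Matrix (Fin n ⊕ (Fin m ⊕ Fin p)) (Fin n ⊕ (Fin m ⊕ Fin p)) ℝ)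
    (hKdef : K = Matrix.fromBlocks A (Matrix.fromCols Bᵀ 0) (Matrix.fromRows B 0)
      (Matrix.fromBlocks (-D) Cᵀ C E))
    (hK : IsUnit K)
    (hnullA : Module.finrank ℝ (LinearMap.ker A.mulVecLin) = m)
    (hE : IsUnit E)
    (Z₂₂ : Matrix (Fin m) (Fin m) ℝ)
    (hZ₂₂def : Z₂₂ = Matrix.of fun i j => K⁻¹ (Sum.inr (Sum.inl i)) (Sum.inr (Sum.inl j))) :
    Z₂₂ = 0 := by
  have hKmul : K * K⁻¹ = 1 := mul_nonsing_inv K (isUnit_iff_isUnit_det K |>.mp hK)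
  -- key computation: for w, (Sum.elim w 0) ᵥ* K
  have hrow : ∀ w : Fin n → ℝ, (Sum.elim w 0) ᵥ* K
      = Sum.elim (w ᵥ* A) (Sum.elim (B *ᵥ w) 0) := by
    intro w
    funext k
    cases k with
    | inl i =>
      simp [hKdef, vecMul, dotProduct, Fintype.sum_sum_type, mulVec]
    | inr k =>
      cases k with
      | inl j =>
        simp [hKdef, vecMul, dotProduct, Fintype.sum_sum_type, mulVec, mul_comm]
      | inr j =>
        simp [hKdef, vecMul, dotProduct, Fintype.sum_sum_type]
  -- injectivity of B on ker Aᵀ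
  have hinj : ∀ w : Fin n → ℝ, Aᵀ *ᵥ w = 0 → B *ᵥ w = 0 → w = 0 := by
    intro w h1 h2
    have hwA : w ᵥ* A = 0 := by rw [← transpose_transpose A, vecMul_transpose, h1]
    have h0 : (Sum.elim w 0) ᵥ* K = 0 := by
      rw [hrow w, hwA, h2]
      funext k; cases k with
      | inl i => simp
      | inr k => cases k <;> simp
    have := congrArg (fun v => v ᵥ* K⁻¹) h0
    simp only [vecMul_vecMul, hKmul, vecMul_one, zero_vecMul] at this
    funext i
    exact congrFun this (Sum.inl i)
  -- dimension count: finrank ker Aᵀ.mulVecLin = m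
  have hfr : Module.finrank ℝ (LinearMap.ker Aᵀ.mulVecLin) = m := by
    have e1 := LinearMap.finrank_range_add_finrank_ker A.mulVecLin
    have e2 := LinearMap.finrank_range_add_finrank_ker Aᵀ.mulVecLin
    have e3 : Aᵀ.rank = A.rank := Matrix.rank_transpose A
    have r1 : A.rank = Module.finrank ℝ (LinearMap.range A.mulVecLin) := rfl
    have r2 : Aᵀ.rank = Module.finrank ℝ (LinearMap.range Aᵀ.mulVecLin) := rfl
    simp only [Module.finrank_pi, Fintype.card_fin] at e1 e2
    omega
  -- B maps ker Aᵀ onto ℝ^m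
  have hsurj : ∀ v : Fin m → ℝ, ∃ w : Fin n → ℝ, Aᵀ *ᵥ w = 0 ∧ B *ᵥ w = v := by
    set S := LinearMap.ker Aᵀ.mulVecLin
    set f : S →ₗ[ℝ] (Fin m → ℝ) := B.mulVecLin ∘ₗ S.subtype with hf
    have hfinj : Function.Injective f := by
      intro x y hxy
      apply Subtype.ext
      have hx : Aᵀ *ᵥ (x : Fin n → ℝ) = 0 := x.2
      have hy : Aᵀ *ᵥ (y : Fin n → ℝ) = 0 := y.2
      have : (x : Fin n → ℝ) - y = 0 := by
        apply hinj
        · rw [mulVec_sub, hx, hy, sub_zero]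
        · have : B *ᵥ (x : Fin n → ℝ) = B *ᵥ (y : Fin n → ℝ) := hxy
          rw [mulVec_sub, this, sub_self]
      exact sub_eq_zero.mp this
    have hrange : LinearMap.range f = ⊤ := by
      apply Submodule.eq_top_of_finrank_eq
      rw [LinearMap.finrank_range_of_inj hfinj, hfr]
      simp
    intro v
    obtain ⟨w, hw⟩ := LinearMap.range_eq_top.mp hrange v
    exact ⟨w, w.2, hw⟩
  -- finish
  ext i j
  obtain ⟨w, hw1, hw2⟩ := hsurj (Pi.single i 1)
  -- middle column of K⁻¹
  set z : (Fin n ⊕ (Fin m ⊕ Fin p)) → ℝ := fun k => K⁻¹ k (Sum.inr (Sum.inl j)) with hz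
  have hcol : K *ᵥ z = Pi.single (Sum.inr (Sum.inl j)) 1 := by
    funext r
    have : (K *ᵥ z) r = (K * K⁻¹) r (Sum.inr (Sum.inl j)) := by
      simp [mulVec, dotProduct, Matrix.mul_apply, hz]
    rw [this, hKmul]
    by_cases h : r = Sum.inr (Sum.inl j) <;> simp [h, Matrix.one_apply, Pi.single_apply]
  have hdot : (Sum.elim w 0) ⬝ᵥ (K *ᵥ z) = 0 := by
    rw [hcol]
    simp
  rw [dotProduct_mulVec, hrow w] at hdot
  have hwA : w ᵥ* A = 0 := by
    rw [← transpose_transpose A, vecMul_transpose, hw1]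
  rw [hwA, hw2] at hdot
  -- hdot : Sum.elim 0 (Sum.elim (Pi.single i 1) 0) ⬝ᵥ z = 0
  simp only [dotProduct, Fintype.sum_sum_type, Sum.elim_inl, Sum.elim_inr, Pi.zero_apply,
    zero_mul, Finset.sum_const_zero, zero_add, add_zero, Pi.single_apply] at hdot
  simp only [hZ₂₂def, Matrix.zero_apply, Matrix.of_apply]
  simpa [hz] using hdot
end

section
/- Suppose A is symmetric positive semidefinite with nullity(A) = m and ker(A) ⊕ ker(B) = ℝⁿ. Let Z be a matrix whose columns form a basis for ker(B) and V = Z(ZᵀAZ)⁻¹Zᵀ. Then ZᵀAZ is invertible and A V A = A. -/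
open Matrix

theorem stmt_17 (n m : ℕ)
    (A : Matrix (Fin n) (Fin n) ℝ) (B : Matrix (Fin m) (Fin n) ℝ)
    (hA : A.PosSemidef)
    (hnull : Module.finrank ℝ (LinearMap.ker A.mulVecLin) = m)
    (hABinf : LinearMap.ker A.mulVecLin ⊓ LinearMap.ker B.mulVecLin = ⊥)
    (hABsum : LinearMap.ker A.mulVecLin ⊔ LinearMap.ker B.mulVecLin = ⊤)
    (Z : Matrix (Fin n) (Fin (n - m)) ℝ)
    (hZinj : Function.Injective Z.mulVecLin)
    (hZran : LinearMap.range Z.mulVecLin = LinearMap.ker B.mulVecLin)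
    (V : Matrix (Fin n) (Fin n) ℝ)
    (hVdef : V = Z * (Zᵀ * A * Z)⁻¹ * Zᵀ) :
    IsUnit (Zᵀ * A * Z) ∧ A * V * A = A := by
  subst hVdef
  have hZH : Zᴴ = Zᵀ := by
    ext i j; simp [conjTranspose_apply]
  -- positive definiteness of ZᵀAZ
  have hPD : (Zᵀ * A * Z).PosDef := by
    have hpsd : (Zᵀ * A * Z).PosSemidef := by
      have := hA.conjTranspose_mul_mul_same Z
      rwa [hZH] at this
    refine posDef_iff_dotProduct_mulVec.mpr ⟨hpsd.1, fun x hx => ?_⟩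
    have hw : Z *ᵥ x ≠ 0 := by
      intro h
      exact hx (hZinj (by simpa [Matrix.mulVecLin_apply] using h))
    have hdp : star x ⬝ᵥ (Zᵀ * A * Z) *ᵥ x = star (Z *ᵥ x) ⬝ᵥ A *ᵥ (Z *ᵥ x) := by
      simp only [star_trivial, ← Matrix.mulVec_mulVec, Matrix.dotProduct_mulVec,
        Matrix.vecMul_transpose]
    rw [hdp]
    rcases lt_or_eq_of_le (hA.dotProduct_mulVec_nonneg (Z *ᵥ x)) with h | h
    · exact h
    · exfalso
      have hAw : A *ᵥ (Z *ᵥ x) = 0 := (hA.dotProduct_mulVec_zero_iff (Z *ᵥ x)).mp h.symm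
      have hmem : (Z *ᵥ x) ∈ LinearMap.ker A.mulVecLin ⊓ LinearMap.ker B.mulVecLin := by
        constructor
        · simpa [Matrix.mulVecLin_apply] using hAw
        · rw [← hZran]
          exact ⟨x, rfl⟩
      rw [hABinf] at hmem
      exact hw hmem
  have hU : IsUnit (Zᵀ * A * Z) := hPD.isUnit
  refine ⟨hU, ?_⟩
  set W := (Zᵀ * A * Z)⁻¹ with hW
  have hinv : W * (Zᵀ * A * Z) = 1 :=
    Matrix.nonsing_inv_mul _ ((Matrix.isUnit_iff_isUnit_det _).mp hU)
  have key : A * (Z * W * Zᵀ) * A * Z = A * Z := by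
    calc A * (Z * W * Zᵀ) * A * Z = A * (Z * (W * (Zᵀ * A * Z))) := by
          simp only [Matrix.mul_assoc]
      _ = A * Z := by rw [hinv, Matrix.mul_one]
  have hvec : ∀ v : Fin n → ℝ, (A * (Z * W * Zᵀ) * A) *ᵥ v = A *ᵥ v := by
    intro v
    have hv : v ∈ LinearMap.ker A.mulVecLin ⊔ LinearMap.ker B.mulVecLin := by
      rw [hABsum]; trivial
    obtain ⟨a, ha, b, hb, rfl⟩ := Submodule.mem_sup.mp hv
    obtain ⟨y, hy⟩ : ∃ y, Z *ᵥ y = b := by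
      rw [← hZran] at hb
      obtain ⟨y, hy⟩ := hb
      exact ⟨y, by simpa [Matrix.mulVecLin_apply] using hy⟩
    have hAa : A *ᵥ a = 0 := by simpa [Matrix.mulVecLin_apply] using ha
    have h1 : (A * (Z * W * Zᵀ) * A) *ᵥ a = 0 := by
      rw [← Matrix.mulVec_mulVec, hAa, Matrix.mulVec_zero]
    have h2 : (A * (Z * W * Zᵀ) * A) *ᵥ b = A *ᵥ b := by
      rw [← hy, Matrix.mulVec_mulVec, key, ← Matrix.mulVec_mulVec]
    rw [Matrix.mulVec_add, Matrix.mulVec_add, h1, h2, hAa]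
  ext i j
  have := congr_fun (hvec (Pi.single j 1)) i
  simpa [Matrix.mulVec_single_one] using this
end

section
/- Suppose A is symmetric positive semidefinite with nullity(A) = m and ker(A) ⊕ ker(B) = ℝⁿ. Then the saddle-point matrix K̂ = [[A, Bᵀ],[B, -D]] is invertible, and its inverse is [[(I−VA)Bᵀ(BBᵀ)⁻¹D(BBᵀ)⁻¹B(I−AV)+V, (I−VA)Bᵀ(BBᵀ)⁻¹],[(BBᵀ)⁻¹B(I−AV), 0]], where V = Z(ZᵀAZ)⁻¹Zᵀ for Z with orthonormal columns spanning ker(B). -/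
open Matrix

/-- Matrices are equal if they agree as linear maps. -/
lemma aux_mulVec_ext {k l : Type*} [Fintype l] [DecidableEq l] {M N : Matrix k l ℝ}
    (h : ∀ x, M *ᵥ x = N *ᵥ x) : M = N := by
  ext i j
  have := congrFun (h (Pi.single j 1)) i
  simpa [Matrix.mulVec_single] using this

/-- A square real matrix with trivial kernel has nonzero determinant. -/
lemma aux_det_ne_zero {k : Type*} [Fintype k] [DecidableEq k] {M : Matrix k k ℝ}
    (h : ∀ v, M *ᵥ v = 0 → v = 0) : M.det ≠ 0 := by
  intro hd
  obtain ⟨v, hv, hMv⟩ := Matrix.exists_mulVec_eq_zero_iff.mpr hd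
  exact hv (h v hMv)

theorem stmt_18 (n m : ℕ)
    (A : Matrix (Fin n) (Fin n) ℝ) (B : Matrix (Fin m) (Fin n) ℝ)
    (D : Matrix (Fin m) (Fin m) ℝ) (hD : D.IsSymm)
    (hA : A.PosSemidef)
    (hnull : Module.finrank ℝ (LinearMap.ker A.mulVecLin) = m)
    (hABinf : LinearMap.ker A.mulVecLin ⊓ LinearMap.ker B.mulVecLin = ⊥)
    (hABsum : LinearMap.ker A.mulVecLin ⊔ LinearMap.ker B.mulVecLin = ⊤)
    (Z : Matrix (Fin n) (Fin (n - m)) ℝ)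
    (hZorth : Zᵀ * Z = 1)
    (hZran : LinearMap.range Z.mulVecLin = LinearMap.ker B.mulVecLin)
    (V : Matrix (Fin n) (Fin n) ℝ)
    (hVdef : V = Z * (Zᵀ * A * Z)⁻¹ * Zᵀ)
    (Khat : Matrix (Fin n ⊕ Fin m) (Fin n ⊕ Fin m) ℝ)
    (hKhatdef : Khat = Matrix.fromBlocks A Bᵀ B (-D)) :
    IsUnit Khat ∧
    Khat⁻¹ = Matrix.fromBlocks
      ((1 - V * A) * Bᵀ * (B * Bᵀ)⁻¹ * D * (B * Bᵀ)⁻¹ * B * (1 - A * V) + V)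
      ((1 - V * A) * Bᵀ * (B * Bᵀ)⁻¹)
      ((B * Bᵀ)⁻¹ * B * (1 - A * V))
      0 := by
  have hdimtop : Module.finrank ℝ (⊤ : Submodule ℝ (Fin n → ℝ)) = n := by
    rw [finrank_top, Module.finrank_fin_fun]
  -- m ≤ n
  have hmn : m ≤ n := by
    have h := Submodule.finrank_le (LinearMap.ker A.mulVecLin)
    rw [hnull, Module.finrank_fin_fun] at h
    exact h
  -- dimension of ker B
  have hkerB : Module.finrank ℝ (LinearMap.ker B.mulVecLin) = n - m := by
    have h := Submodule.finrank_sup_add_finrank_inf_eq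
      (LinearMap.ker A.mulVecLin) (LinearMap.ker B.mulVecLin)
    rw [hABsum, hABinf, hnull, hdimtop, finrank_bot] at h
    omega
  -- B * Z = 0
  have hBZ : B * Z = 0 := by
    apply aux_mulVec_ext; intro x
    have hx : Z.mulVecLin x ∈ LinearMap.ker B.mulVecLin := by
      rw [← hZran]; exact ⟨x, rfl⟩
    have hx' : B *ᵥ (Z *ᵥ x) = 0 := by
      simpa [Matrix.mulVecLin_apply] using hx
    rw [Matrix.mulVec_mulVec] at hx'
    rw [hx', Matrix.zero_mulVec]
  have hZBt : Zᵀ * Bᵀ = 0 := by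
    have := congrArg Matrix.transpose hBZ
    simpa [Matrix.transpose_mul] using this
  -- Z is injective
  have hZinj : ∀ v, Z *ᵥ v = 0 → v = 0 := by
    intro v hv
    have : (Zᵀ * Z) *ᵥ v = 0 := by
      rw [← Matrix.mulVec_mulVec, hv, Matrix.mulVec_zero]
    rwa [hZorth, Matrix.one_mulVec] at this
  -- Zᵀ A Z is invertible
  have hZAZdet : IsUnit (Zᵀ * A * Z).det := by
    rw [isUnit_iff_ne_zero]
    apply aux_det_ne_zero
    intro v hv
    have hdot : star (Z *ᵥ v) ⬝ᵥ A *ᵥ (Z *ᵥ v) = 0 := by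
      have h1 : v ⬝ᵥ ((Zᵀ * A * Z) *ᵥ v) = 0 := by rw [hv, dotProduct_zero]
      have h2 : v ⬝ᵥ ((Zᵀ * A * Z) *ᵥ v) = (Z *ᵥ v) ⬝ᵥ (A *ᵥ (Z *ᵥ v)) := by
        rw [← Matrix.mulVec_mulVec, ← Matrix.mulVec_mulVec,
          Matrix.dotProduct_mulVec v Zᵀ, Matrix.vecMul_transpose]
      rw [h2] at h1
      simpa using h1
    have hAZv : A *ᵥ (Z *ᵥ v) = 0 := (hA.dotProduct_mulVec_zero_iff (Z *ᵥ v)).mp hdot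
    have hmem : Z *ᵥ v ∈ LinearMap.ker A.mulVecLin ⊓ LinearMap.ker B.mulVecLin := by
      constructor
      · simpa [Matrix.mulVecLin_apply] using hAZv
      · rw [← hZran]; exact ⟨v, by simp [Matrix.mulVecLin_apply]⟩
    rw [hABinf, Submodule.mem_bot] at hmem
    exact hZinj v hmem
  -- rank of B
  have hrankB : Module.finrank ℝ (LinearMap.range B.mulVecLin) = m := by
    have h := LinearMap.finrank_range_add_finrank_ker B.mulVecLin
    rw [hkerB, Module.finrank_fin_fun] at h
    omega
  have hrankBt : Module.finrank ℝ (LinearMap.range Bᵀ.mulVecLin) = m := by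
    have h := Matrix.rank_transpose B
    rw [show Bᵀ.rank = Module.finrank ℝ (LinearMap.range Bᵀ.mulVecLin) from rfl,
      show B.rank = Module.finrank ℝ (LinearMap.range B.mulVecLin) from rfl, hrankB] at h
    exact h
  -- ker Bᵀ is trivial
  have hkerBt : ∀ v, Bᵀ *ᵥ v = 0 → v = 0 := by
    have hker0 : LinearMap.ker Bᵀ.mulVecLin = ⊥ := by
      rw [← Submodule.finrank_eq_zero (R := ℝ)]
      have h := LinearMap.finrank_range_add_finrank_ker Bᵀ.mulVecLin
      rw [hrankBt, Module.finrank_fin_fun] at h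
      omega
    intro v hv
    have : v ∈ LinearMap.ker Bᵀ.mulVecLin := by
      simpa [Matrix.mulVecLin_apply, Matrix.mulVec_transpose] using hv
    rwa [hker0, Submodule.mem_bot] at this
  -- B Bᵀ invertible
  have hBBtdet : IsUnit (B * Bᵀ).det := by
    rw [isUnit_iff_ne_zero]
    apply aux_det_ne_zero
    intro v hv
    have hdot : (Bᵀ *ᵥ v) ⬝ᵥ (Bᵀ *ᵥ v) = 0 := by
      have h1 : v ⬝ᵥ ((B * Bᵀ) *ᵥ v) = 0 := by rw [hv, dotProduct_zero]
      rw [← Matrix.mulVec_mulVec, Matrix.dotProduct_mulVec v B,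
        ← Matrix.mulVec_transpose] at h1
      exact h1
    exact hkerBt v (dotProduct_self_eq_zero.mp hdot)
  have hS1 : (B * Bᵀ)⁻¹ * (B * Bᵀ) = 1 := Matrix.nonsing_inv_mul _ hBBtdet
  have hG1 : (Zᵀ * A * Z)⁻¹ * (Zᵀ * A * Z) = 1 := Matrix.nonsing_inv_mul _ hZAZdet
  -- V A Z = Z
  have hVAZ : V * A * Z = Z := by
    rw [hVdef]
    calc Z * (Zᵀ * A * Z)⁻¹ * Zᵀ * A * Z
        = Z * ((Zᵀ * A * Z)⁻¹ * (Zᵀ * A * Z)) := by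
          simp only [Matrix.mul_assoc]
      _ = Z := by rw [hG1, Matrix.mul_one]
  -- V Bᵀ = 0
  have hVBt : V * Bᵀ = 0 := by
    rw [hVdef, Matrix.mul_assoc, hZBt, Matrix.mul_zero]
  -- A V A = A
  have hAVA : A * V * A = A := by
    have key : A * V * A * Z = A * Z := by
      rw [mul_assoc A V A, Matrix.mul_assoc A (V * A) Z, hVAZ]
    apply aux_mulVec_ext; intro x
    have hxtop : x ∈ LinearMap.ker A.mulVecLin ⊔ LinearMap.ker B.mulVecLin := by
      rw [hABsum]; trivial
    obtain ⟨u, hu, w, hw, hx⟩ := Submodule.mem_sup.mp hxtop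
    rw [← hZran] at hw
    obtain ⟨c, hc⟩ := hw
    have hu' : A *ᵥ u = 0 := by simpa [Matrix.mulVecLin_apply] using hu
    have hc' : Z *ᵥ c = w := by simpa [Matrix.mulVecLin_apply] using hc
    subst hx
    rw [← hc']
    have hu2 : (A * V * A) *ᵥ u = 0 := by
      rw [← Matrix.mulVec_mulVec, hu', Matrix.mulVec_zero]
    have hc2 : (A * V * A) *ᵥ (Z *ᵥ c) = A *ᵥ (Z *ᵥ c) := by
      rw [Matrix.mulVec_mulVec, Matrix.mulVec_mulVec, key]
    rw [Matrix.mulVec_add, Matrix.mulVec_add, hu2, hu', hc2]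
  -- span fact : range Z ⊔ range Bᵀ = ⊤
  have hspan : LinearMap.range Z.mulVecLin ⊔ LinearMap.range Bᵀ.mulVecLin = ⊤ := by
    have hinf : LinearMap.range Z.mulVecLin ⊓ LinearMap.range Bᵀ.mulVecLin = ⊥ := by
      rw [eq_bot_iff]
      rintro x ⟨⟨c, rfl⟩, d, hd⟩
      have hxx : Z.mulVecLin c ⬝ᵥ Z.mulVecLin c = 0 := by
        nth_rewrite 2 [← hd]
        rw [Matrix.mulVecLin_apply, Matrix.mulVecLin_apply,
          Matrix.dotProduct_mulVec, Matrix.vecMul_transpose, Matrix.mulVec_mulVec,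
          hBZ, Matrix.zero_mulVec, zero_dotProduct]
      rw [Submodule.mem_bot]
      have := dotProduct_self_eq_zero.mp hxx
      simpa using this
    have hrZ : Module.finrank ℝ (LinearMap.range Z.mulVecLin) = n - m := by
      rw [hZran, hkerB]
    have h := Submodule.finrank_sup_add_finrank_inf_eq
      (LinearMap.range Z.mulVecLin) (LinearMap.range Bᵀ.mulVecLin)
    rw [hinf, finrank_bot, hrZ, hrankBt] at h
    apply Submodule.eq_top_of_finrank_eq
    rw [Module.finrank_fin_fun]
    omega
  -- Bᵀ (B Bᵀ)⁻¹ B = 1 - Z Zᵀ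
  have hBtSB : Bᵀ * (B * Bᵀ)⁻¹ * B = 1 - Z * Zᵀ := by
    have hLZ : Bᵀ * (B * Bᵀ)⁻¹ * B * Z = 0 := by
      rw [Matrix.mul_assoc (Bᵀ * (B * Bᵀ)⁻¹) B Z, hBZ, Matrix.mul_zero]
    have hLB : Bᵀ * (B * Bᵀ)⁻¹ * B * Bᵀ = Bᵀ := by
      rw [Matrix.mul_assoc (Bᵀ * (B * Bᵀ)⁻¹) B Bᵀ,
        Matrix.mul_assoc Bᵀ (B * Bᵀ)⁻¹ (B * Bᵀ), hS1, Matrix.mul_one]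
    have hRZ : (1 - Z * Zᵀ) * Z = 0 := by
      rw [Matrix.sub_mul, Matrix.one_mul, Matrix.mul_assoc Z Zᵀ Z, hZorth,
        Matrix.mul_one, sub_self]
    have hRB : (1 - Z * Zᵀ) * Bᵀ = Bᵀ := by
      rw [Matrix.sub_mul, Matrix.one_mul, Matrix.mul_assoc Z Zᵀ Bᵀ, hZBt,
        Matrix.mul_zero, sub_zero]
    apply aux_mulVec_ext; intro x
    have hxtop : x ∈ LinearMap.range Z.mulVecLin ⊔ LinearMap.range Bᵀ.mulVecLin := by
      rw [hspan]; trivial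
    obtain ⟨y, ⟨c, rfl⟩, z, ⟨d, rfl⟩, hx⟩ := Submodule.mem_sup.mp hxtop
    subst hx
    rw [Matrix.mulVecLin_apply, Matrix.mulVecLin_apply]
    simp only [Matrix.mulVec_add, Matrix.mulVec_mulVec, hLZ, hLB, hRZ, hRB]
  -- key simplification identities
  have h1 : (1 - A * V) * A = 0 := by
    rw [sub_mul, one_mul, hAVA, sub_self]
  have h2 : (1 - A * V) * Bᵀ = Bᵀ := by
    rw [Matrix.sub_mul, Matrix.one_mul, Matrix.mul_assoc A V Bᵀ, hVBt,
      Matrix.mul_zero, sub_zero]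
  have h3 : (1 - V * A) * Z = 0 := by
    rw [Matrix.sub_mul, Matrix.one_mul, hVAZ, sub_self]
  have hQB : (1 - V * A) * Bᵀ * (B * Bᵀ)⁻¹ * B = 1 - V * A := by
    calc (1 - V * A) * Bᵀ * (B * Bᵀ)⁻¹ * B
        = (1 - V * A) * (Bᵀ * (B * Bᵀ)⁻¹ * B) := by simp only [Matrix.mul_assoc]
      _ = (1 - V * A) * (1 - Z * Zᵀ) := by rw [hBtSB]
      _ = 1 - V * A := by
          rw [mul_sub, mul_one, ← Matrix.mul_assoc (1 - V * A) Z Zᵀ, h3,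
            Matrix.zero_mul, sub_zero]
  -- the four block identities
  have hTL : ((1 - V * A) * Bᵀ * (B * Bᵀ)⁻¹ * D * (B * Bᵀ)⁻¹ * B * (1 - A * V) + V) * A
      + (1 - V * A) * Bᵀ * (B * Bᵀ)⁻¹ * B = 1 := by
    rw [Matrix.add_mul,
      Matrix.mul_assoc ((1 - V * A) * Bᵀ * (B * Bᵀ)⁻¹ * D * (B * Bᵀ)⁻¹ * B) (1 - A * V) A,
      h1, Matrix.mul_zero, zero_add, hQB]
    abel
  have hTR : ((1 - V * A) * Bᵀ * (B * Bᵀ)⁻¹ * D * (B * Bᵀ)⁻¹ * B * (1 - A * V) + V) * Bᵀ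
      + (1 - V * A) * Bᵀ * (B * Bᵀ)⁻¹ * -D = 0 := by
    rw [Matrix.add_mul,
      Matrix.mul_assoc ((1 - V * A) * Bᵀ * (B * Bᵀ)⁻¹ * D * (B * Bᵀ)⁻¹ * B) (1 - A * V) Bᵀ,
      h2, Matrix.mul_assoc ((1 - V * A) * Bᵀ * (B * Bᵀ)⁻¹ * D * (B * Bᵀ)⁻¹) B Bᵀ,
      Matrix.mul_assoc ((1 - V * A) * Bᵀ * (B * Bᵀ)⁻¹ * D) ((B * Bᵀ)⁻¹) (B * Bᵀ),
      hS1, Matrix.mul_one, hVBt, Matrix.mul_neg]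
    abel
  have hBL : (B * Bᵀ)⁻¹ * B * (1 - A * V) * A + (0 : Matrix (Fin m) (Fin m) ℝ) * B = 0 := by
    rw [Matrix.mul_assoc ((B * Bᵀ)⁻¹ * B) (1 - A * V) A, h1, Matrix.mul_zero,
      Matrix.zero_mul, add_zero]
  have hBR : (B * Bᵀ)⁻¹ * B * (1 - A * V) * Bᵀ + (0 : Matrix (Fin m) (Fin m) ℝ) * -D = 1 := by
    rw [Matrix.mul_assoc ((B * Bᵀ)⁻¹ * B) (1 - A * V) Bᵀ, h2,
      Matrix.mul_assoc (B * Bᵀ)⁻¹ B Bᵀ, hS1, Matrix.zero_mul, add_zero]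
  -- assemble
  have hmain : Matrix.fromBlocks
      ((1 - V * A) * Bᵀ * (B * Bᵀ)⁻¹ * D * (B * Bᵀ)⁻¹ * B * (1 - A * V) + V)
      ((1 - V * A) * Bᵀ * (B * Bᵀ)⁻¹)
      ((B * Bᵀ)⁻¹ * B * (1 - A * V))
      0 * Khat = 1 := by
    rw [hKhatdef, Matrix.fromBlocks_multiply, hTL, hTR, hBL, hBR, Matrix.fromBlocks_one]
  have hKM := mul_eq_one_comm.mpr hmain
  refine ⟨?_, Matrix.inv_eq_left_inv hmain⟩
  rw [Matrix.isUnit_iff_isUnit_det]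
  exact IsUnit.of_mul_eq_one _ (by rw [← Matrix.det_mul, hKM, Matrix.det_one])
end

section
/- Suppose A is symmetric positive semidefinite with nullity(A) = m, ker(A) ⊕ ker(B) = ℝⁿ, and E is symmetric and invertible. Then K⁻¹ = [[T, Rᵀ, Sᵀ],[R, 0, 0],[S, 0, E⁻¹]], where V = Z(ZᵀAZ)⁻¹Zᵀ with Z having orthonormal columns spanning ker(B), T = (I−VA)Bᵀ(BBᵀ)⁻¹(D + CᵀE⁻¹C)(BBᵀ)⁻¹B(I−AV) + V, R = (BBᵀ)⁻¹B(I−AV), and S = −E⁻¹C(BBᵀ)⁻¹B(I−AV). -/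
open Matrix

private lemma aux19_ext {a b : ℕ} {X Y : Matrix (Fin a) (Fin b) ℝ}
    (h : ∀ v, X *ᵥ v = Y *ᵥ v) : X = Y := by
  ext i j
  simpa [Matrix.mulVec_single] using congrFun (h (Pi.single j 1)) i

private lemma aux19_fromColumns_add {a b c : ℕ}
    (X₁ : Matrix (Fin a) (Fin b) ℝ) (X₂ : Matrix (Fin a) (Fin c) ℝ)
    (Y₁ : Matrix (Fin a) (Fin b) ℝ) (Y₂ : Matrix (Fin a) (Fin c) ℝ) :
    fromCols X₁ X₂ + fromCols Y₁ Y₂ = fromCols (X₁ + Y₁) (X₂ + Y₂) := by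
  ext i (j | j) <;> rfl

private lemma aux19_fromRows_add {a b c : ℕ}
    (X₁ : Matrix (Fin a) (Fin c) ℝ) (X₂ : Matrix (Fin b) (Fin c) ℝ)
    (Y₁ : Matrix (Fin a) (Fin c) ℝ) (Y₂ : Matrix (Fin b) (Fin c) ℝ) :
    fromRows X₁ X₂ + fromRows Y₁ Y₂ = fromRows (X₁ + Y₁) (X₂ + Y₂) := by
  ext (i | i) j <;> rfl

theorem stmt_19 (n m p : ℕ)
    (A : Matrix (Fin n) (Fin n) ℝ) (D : Matrix (Fin m) (Fin m) ℝ)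
    (E : Matrix (Fin p) (Fin p) ℝ)
    (B : Matrix (Fin m) (Fin n) ℝ) (C : Matrix (Fin p) (Fin m) ℝ)
    (hA : A.PosSemidef) (hD : D.IsSymm) (hE : E.IsSymm) (hEunit : IsUnit E)
    (hnull : Module.finrank ℝ (LinearMap.ker A.mulVecLin) = m)
    (hABinf : LinearMap.ker A.mulVecLin ⊓ LinearMap.ker B.mulVecLin = ⊥)
    (hABsum : LinearMap.ker A.mulVecLin ⊔ LinearMap.ker B.mulVecLin = ⊤)
    (Z : Matrix (Fin n) (Fin (n - m)) ℝ)
    (hZorth : Zᵀ * Z = 1)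
    (hZran : LinearMap.range Z.mulVecLin = LinearMap.ker B.mulVecLin)
    (V : Matrix (Fin n) (Fin n) ℝ)
    (hVdef : V = Z * (Zᵀ * A * Z)⁻¹ * Zᵀ)
    (T : Matrix (Fin n) (Fin n) ℝ)
    (hTdef : T = (1 - V * A) * Bᵀ * (B * Bᵀ)⁻¹ * (D + Cᵀ * E⁻¹ * C) *
      (B * Bᵀ)⁻¹ * B * (1 - A * V) + V)
    (R : Matrix (Fin m) (Fin n) ℝ)
    (hRdef : R = (B * Bᵀ)⁻¹ * B * (1 - A * V))
    (S : Matrix (Fin p) (Fin n) ℝ)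
    (hSdef : S = -(E⁻¹ * C * (B * Bᵀ)⁻¹ * B * (1 - A * V)))
    (K : Matrix (Fin n ⊕ (Fin m ⊕ Fin p)) (Fin n ⊕ (Fin m ⊕ Fin p)) ℝ)
    (hKdef : K = Matrix.fromBlocks A (Matrix.fromCols Bᵀ 0) (Matrix.fromRows B 0)
      (Matrix.fromBlocks (-D) Cᵀ C E)) :
    K⁻¹ = Matrix.fromBlocks T (Matrix.fromCols Rᵀ Sᵀ) (Matrix.fromRows R S)
      (Matrix.fromBlocks 0 0 0 E⁻¹) := by
  have hAs : Aᵀ = A := by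
    have h := hA.1.eq
    rwa [conjTranspose_eq_transpose_of_trivial] at h
  -- Z is injective
  have hZinj : ∀ y, Z *ᵥ y = 0 → y = 0 := by
    intro y hy
    have h2 : (Zᵀ * Z) *ᵥ y = Zᵀ *ᵥ (Z *ᵥ y) := by rw [← Matrix.mulVec_mulVec]
    rw [hZorth, Matrix.one_mulVec, hy, Matrix.mulVec_zero] at h2
    exact h2
  -- B * Z = 0
  have hBZ : B * Z = 0 := by
    apply aux19_ext; intro v
    have hmem : Z *ᵥ v ∈ LinearMap.ker B.mulVecLin := by
      rw [← hZran]; exact ⟨v, rfl⟩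
    have : B *ᵥ (Z *ᵥ v) = 0 := hmem
    rw [← Matrix.mulVec_mulVec, this, Matrix.zero_mulVec]
  have hZB : Zᵀ * Bᵀ = 0 := by
    have := congrArg Matrix.transpose hBZ
    simpa [Matrix.transpose_mul] using this
  -- Zᵀ A Z is positive definite
  have hpd : (Zᵀ * A * Z).PosDef := by
    refine Matrix.PosDef.of_dotProduct_mulVec_pos ?_ ?_
    · show _ᴴ = _
      simp only [conjTranspose_eq_transpose_of_trivial, Matrix.transpose_mul,
        transpose_transpose, hAs, Matrix.mul_assoc]
    · intro x hx
      have hle : 0 ≤ (Z *ᵥ x) ⬝ᵥ A *ᵥ (Z *ᵥ x) := by simpa using hA.dotProduct_mulVec_nonneg (Z *ᵥ x)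
      have heq : x ⬝ᵥ (Zᵀ * A * Z) *ᵥ x = (Z *ᵥ x) ⬝ᵥ A *ᵥ (Z *ᵥ x) := by
        rw [← Matrix.mulVec_mulVec, ← Matrix.mulVec_mulVec, Matrix.dotProduct_mulVec,
          Matrix.vecMul_transpose]
      have hne : (Z *ᵥ x) ⬝ᵥ A *ᵥ (Z *ᵥ x) ≠ 0 := by
        intro h0
        have hAZx : A *ᵥ (Z *ᵥ x) = 0 := by
          have := (hA.dotProduct_mulVec_zero_iff (Z *ᵥ x)).mp (by simpa using h0)
          simpa using this
        have hmem : Z *ᵥ x ∈ LinearMap.ker A.mulVecLin ⊓ LinearMap.ker B.mulVecLin := by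
          constructor
          · simpa [Matrix.mulVecLin_apply] using hAZx
          · rw [← hZran]; exact ⟨x, rfl⟩
        rw [hABinf] at hmem
        exact hx (hZinj x (by simpa using hmem))
      simp only [star_trivial, heq]
      exact lt_of_le_of_ne hle (Ne.symm hne)
  have hMdet : IsUnit (Zᵀ * A * Z).det := (Matrix.isUnit_iff_isUnit_det _).mp hpd.isUnit
  have hMinv : (Zᵀ * A * Z)⁻¹ * (Zᵀ * A * Z) = 1 := Matrix.nonsing_inv_mul _ hMdet
  have hMs : (Zᵀ * A * Z)ᵀ = Zᵀ * A * Z := by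
    have h := hpd.1.eq
    rwa [conjTranspose_eq_transpose_of_trivial] at h
  -- V A Z = Z
  have hVAZ : V * (A * Z) = Z := by
    rw [hVdef]
    calc Z * (Zᵀ * A * Z)⁻¹ * Zᵀ * (A * Z)
        = Z * ((Zᵀ * A * Z)⁻¹ * (Zᵀ * A * Z)) := by
          simp only [Matrix.mul_assoc]
      _ = Z := by rw [hMinv, Matrix.mul_one]
  have h1Z : (1 - V * A) * Z = 0 := by
    rw [Matrix.sub_mul, Matrix.one_mul, Matrix.mul_assoc, hVAZ, sub_self]
  -- V Bᵀ = 0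
  have hVBt : V * Bᵀ = 0 := by
    rw [hVdef, Matrix.mul_assoc, hZB, Matrix.mul_zero]
  -- V symmetric
  have hVs : Vᵀ = V := by
    rw [hVdef]
    simp only [Matrix.transpose_mul, transpose_transpose, Matrix.transpose_nonsing_inv, hMs]
    simp [Matrix.mul_assoc]
  -- A V A = A
  have hAVA : A * (V * A) = A := by
    apply aux19_ext; intro v
    have hv : v ∈ LinearMap.ker A.mulVecLin ⊔ LinearMap.ker B.mulVecLin := by
      rw [hABsum]; trivial
    obtain ⟨u, hu, w, hw, rfl⟩ := Submodule.mem_sup.mp hv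
    rw [← hZran] at hw
    obtain ⟨y, hy⟩ := hw
    have hu0 : A *ᵥ u = 0 := hu
    have hy' : Z *ᵥ y = w := hy
    rw [Matrix.mulVec_add, Matrix.mulVec_add]
    congr 1
    · rw [← Matrix.mulVec_mulVec, ← Matrix.mulVec_mulVec, hu0]
      simp
    · rw [← hy', Matrix.mulVec_mulVec, Matrix.mulVec_mulVec, Matrix.mul_assoc,
        Matrix.mul_assoc, hVAZ]
  -- B Bᵀ is invertible
  have hBBu : IsUnit (B * Bᵀ) := by
    have hdim : m + Module.finrank ℝ (LinearMap.ker B.mulVecLin) = n := by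
      have h := Submodule.finrank_sup_add_finrank_inf_eq
        (LinearMap.ker A.mulVecLin) (LinearMap.ker B.mulVecLin)
      rw [hABinf, hABsum, hnull] at h
      simp only [finrank_top, Module.finrank_pi, Fintype.card_fin, finrank_bot, add_zero] at h
      omega
    have hrange : LinearMap.range B.mulVecLin = ⊤ := by
      apply Submodule.eq_top_of_finrank_eq
      have h := LinearMap.finrank_range_add_finrank_ker B.mulVecLin
      simp only [Module.finrank_pi, Fintype.card_fin] at h ⊢
      omega
    have hker : ∀ v, (B * Bᵀ) *ᵥ v = 0 → v = 0 := by
      intro x hx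
      have hBtx : Bᵀ *ᵥ x = 0 := by
        have h1 : x ⬝ᵥ (B * Bᵀ) *ᵥ x = (Bᵀ *ᵥ x) ⬝ᵥ (Bᵀ *ᵥ x) := by
          rw [← Matrix.mulVec_mulVec, Matrix.dotProduct_mulVec, ← Matrix.mulVec_transpose]
        rw [hx, dotProduct_zero] at h1
        exact (dotProduct_self_eq_zero.mp h1.symm)
      funext i
      obtain ⟨y, hy⟩ : ∃ y, B *ᵥ y = Pi.single i 1 := by
        have : (Pi.single i 1 : Fin m → ℝ) ∈ LinearMap.range B.mulVecLin :=
          hrange ▸ Submodule.mem_top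
        obtain ⟨y, hy⟩ := this; exact ⟨y, hy⟩
      have hxy : x ⬝ᵥ (B *ᵥ y) = 0 := by
        rw [Matrix.dotProduct_mulVec, ← Matrix.mulVec_transpose, hBtx, zero_dotProduct]
      rw [hy] at hxy
      simpa [dotProduct, Pi.single_apply] using hxy
    rw [← Matrix.mulVec_injective_iff_isUnit]
    exact LinearMap.ker_eq_bot.mp (Matrix.ker_mulVecLin_eq_bot_iff.mpr hker)
  have hBBdet : IsUnit (B * Bᵀ).det := (Matrix.isUnit_iff_isUnit_det _).mp hBBu
  have hGl : (B * Bᵀ)⁻¹ * (B * Bᵀ) = 1 := Matrix.nonsing_inv_mul _ hBBdet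
  have hGr : (B * Bᵀ) * (B * Bᵀ)⁻¹ = 1 := Matrix.mul_nonsing_inv _ hBBdet
  have hGs : ((B * Bᵀ)⁻¹)ᵀ = (B * Bᵀ)⁻¹ := by
    rw [Matrix.transpose_nonsing_inv]
    congr 1
    rw [Matrix.transpose_mul, transpose_transpose]
  -- the projection identity
  have hBP : B * (1 - Bᵀ * ((B * Bᵀ)⁻¹ * B)) = 0 := by
    rw [Matrix.mul_sub, Matrix.mul_one, ← Matrix.mul_assoc, ← Matrix.mul_assoc, hGr,
      Matrix.one_mul, sub_self]
  have hQ : (1 - V * A) * (1 - Bᵀ * ((B * Bᵀ)⁻¹ * B)) = 0 := by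
    apply aux19_ext; intro v
    have hwker : (1 - Bᵀ * ((B * Bᵀ)⁻¹ * B)) *ᵥ v ∈ LinearMap.ker B.mulVecLin := by
      have : B *ᵥ ((1 - Bᵀ * ((B * Bᵀ)⁻¹ * B)) *ᵥ v) = 0 := by
        rw [Matrix.mulVec_mulVec, hBP, Matrix.zero_mulVec]
      simpa [Matrix.mulVecLin_apply] using this
    rw [← hZran] at hwker
    obtain ⟨y, hy⟩ := hwker
    have hy' : Z *ᵥ y = (1 - Bᵀ * ((B * Bᵀ)⁻¹ * B)) *ᵥ v := hy
    rw [← Matrix.mulVec_mulVec, ← hy', Matrix.mulVec_mulVec, h1Z, Matrix.zero_mulVec,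
      Matrix.zero_mulVec]
  have hr5 : V * (A * (Bᵀ * ((B * Bᵀ)⁻¹ * B))) = Bᵀ * ((B * Bᵀ)⁻¹ * B) + V * A - 1 := by
    linear_combination (norm := noncomm_ring) hQ
  -- symmetric transposes
  have hEs : Eᵀ = E := hE
  have hEis : (E⁻¹)ᵀ = E⁻¹ := by rw [Matrix.transpose_nonsing_inv, hEs]
  have hEdet : IsUnit E.det := (Matrix.isUnit_iff_isUnit_det _).mp hEunit
  have hEl : E⁻¹ * E = 1 := Matrix.nonsing_inv_mul _ hEdet
  have hRt : Rᵀ = (1 - V * A) * (Bᵀ * (B * Bᵀ)⁻¹) := by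
    rw [hRdef]
    simp only [Matrix.transpose_mul, Matrix.transpose_sub, Matrix.transpose_one,
      transpose_transpose, hVs, hAs, hGs, Matrix.mul_assoc]
  have hSt : Sᵀ = -((1 - V * A) * (Bᵀ * ((B * Bᵀ)⁻¹ * (Cᵀ * E⁻¹)))) := by
    rw [hSdef]
    simp only [Matrix.transpose_neg, Matrix.transpose_mul, Matrix.transpose_sub,
      Matrix.transpose_one, transpose_transpose, hVs, hAs, hGs, hEis, Matrix.mul_assoc]
  -- now the block computation
  rw [hKdef]
  apply Matrix.inv_eq_left_inv
  rw [Matrix.fromBlocks_multiply]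
  rw [Matrix.fromCols_mul_fromRows, Matrix.mul_fromCols,
    Matrix.fromCols_mul_fromBlocks, Matrix.fromRows_mul, Matrix.fromBlocks_mul_fromRows,
    Matrix.fromRows_mul_fromCols, Matrix.fromBlocks_multiply,
    aux19_fromColumns_add, aux19_fromRows_add, Matrix.fromBlocks_add, ← Matrix.fromBlocks_one]
  rw [Matrix.fromBlocks_inj]
  refine ⟨?_, ?_, ?_, ?_⟩
  · -- T * A + (Rᵀ * B + Sᵀ * 0) = 1
    rw [hTdef, hRt, hSt]
    simp only [Matrix.mul_zero, add_zero, Matrix.sub_mul, Matrix.mul_sub,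
      Matrix.add_mul, Matrix.mul_add, Matrix.one_mul, Matrix.mul_one, Matrix.neg_mul,
      Matrix.mul_neg, Matrix.zero_mul, Matrix.mul_assoc, hAVA, hVBt, hGl, hEl, hr5]
    abel
  · -- second block column
    rw [← Matrix.fromCols_zero, Matrix.fromCols_ext_iff]
    constructor
    · rw [hTdef, hRt, hSt]
      simp only [Matrix.mul_zero, add_zero, Matrix.sub_mul, Matrix.mul_sub,
        Matrix.add_mul, Matrix.mul_add, Matrix.one_mul, Matrix.mul_one, Matrix.neg_mul,
        Matrix.mul_neg, Matrix.zero_mul, Matrix.mul_assoc, hAVA, hVBt, hGl, hEl, hr5]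
      abel
    · rw [hTdef, hRt, hSt]
      simp only [Matrix.mul_zero, add_zero, zero_add, Matrix.sub_mul, Matrix.mul_sub,
        Matrix.add_mul, Matrix.mul_add, Matrix.one_mul, Matrix.mul_one, Matrix.neg_mul,
        Matrix.mul_neg, Matrix.zero_mul, Matrix.mul_assoc, hAVA, hVBt, hGl, hEl, hr5]
      abel
  · -- third block row
    rw [← Matrix.fromRows_zero, Matrix.fromRows_ext_iff]
    constructor
    · rw [hRdef]
      simp only [Matrix.mul_zero, add_zero, zero_add, Matrix.sub_mul, Matrix.mul_sub,
        Matrix.add_mul, Matrix.mul_add, Matrix.one_mul, Matrix.mul_one, Matrix.neg_mul,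
        Matrix.mul_neg, Matrix.zero_mul, Matrix.mul_assoc, hAVA, hVBt, hGl, hEl, hr5]
      abel
    · rw [hSdef]
      simp only [Matrix.mul_zero, add_zero, zero_add, Matrix.sub_mul, Matrix.mul_sub,
        Matrix.add_mul, Matrix.mul_add, Matrix.one_mul, Matrix.mul_one, Matrix.neg_mul,
        Matrix.mul_neg, Matrix.zero_mul, Matrix.mul_assoc, hAVA, hVBt, hGl, hEl, hr5]
      abel
  · -- fourth block
    rw [← Matrix.fromBlocks_one, Matrix.fromBlocks_inj]
    refine ⟨?_, ?_, ?_, ?_⟩ <;>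
    · simp only [hRdef, hSdef, Matrix.mul_zero, add_zero, zero_add, Matrix.sub_mul, Matrix.mul_sub,
        Matrix.add_mul, Matrix.mul_add, Matrix.one_mul, Matrix.mul_one, Matrix.neg_mul,
        Matrix.mul_neg, Matrix.zero_mul, Matrix.mul_assoc, hAVA, hVBt, hGl, hEl, hr5]
      try abel
end
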